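/- arXiv:math/0612563 — 6 statements merged into one kernel-verified Lean document; each statement's English description precedes it below -/
import Mathlib

section
/- Every 2-coloring of the 2-element subsets of an 18-element set contains a monochromatic subset of size 4, and there exists a 2-coloring of the 2-element subsets of a 17-element set with no monochromatic subset of size 4; that is, the Ramsey number N(2,4) equals 18. -/
namespace RamseyUp

variable (c : Finset (Fin 18) → Bool)

def r (a b : Fin 18) : Bool := c {a, b}

lemma r_symm (a b : Fin 18) : r c a b = r c b a := by
  unfold r; rw [Finset.pair_comm]

/-- packaging: 4 pairwise-distinct vertices with all 6 pairs colored `i`. -/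
lemma pack (i : Bool) (w x y z : Fin 18)
    (hwx : w ≠ x) (hwy : w ≠ y) (hwz : w ≠ z) (hxy : x ≠ y) (hxz : x ≠ z) (hyz : y ≠ z)
    (cwx : r c w x = i) (cwy : r c w y = i) (cwz : r c w z = i)
    (cxy : r c x y = i) (cxz : r c x z = i) (cyz : r c y z = i) :
    ∃ H : Finset (Fin 18), H.card = 4 ∧ ∃ j : Bool, ∀ e ⊆ H, e.card = 2 → c e = j := by
  refine ⟨{w, x, y, z}, ?_, i, ?_⟩
  · rw [Finset.card_insert_of_notMem (by simp [hwx, hwy, hwz]),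
      Finset.card_insert_of_notMem (by simp [hxy, hxz]),
      Finset.card_insert_of_notMem (by simp [hyz]), Finset.card_singleton]
  · have key : ∀ a b : Fin 18, a ∈ ({w, x, y, z} : Finset (Fin 18)) →
        b ∈ ({w, x, y, z} : Finset (Fin 18)) → a ≠ b → r c a b = i := by
      intro a b ha hb hab
      simp only [Finset.mem_insert, Finset.mem_singleton] at ha hb
      rcases ha with rfl | rfl | rfl | rfl <;> rcases hb with rfl | rfl | rfl | rfl <;>
        first
          | exact absurd rfl hab
          | assumption
          | (rw [r_symm]; assumption)
    intro e he hc2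
    obtain ⟨a, b, hab, rfl⟩ := Finset.card_eq_two.mp hc2
    have ha := he (Finset.mem_insert_self a {b})
    have hb := he (Finset.mem_insert_of_mem (Finset.mem_singleton_self b))
    exact key a b ha hb hab

end RamseyUp

namespace RamseyUp

lemma bool_ne (b i : Bool) (h : ¬ b = i) : b = !i := by cases b <;> cases i <;> simp_all

/-- R(3,3) ≤ 6 : any 6-subset contains a monochromatic triangle. -/
lemma tri (c : Finset (Fin 18) → Bool) (S : Finset (Fin 18)) (h6 : 6 ≤ S.card) :
    ∃ j : Bool, ∃ x y z : Fin 18, x ∈ S ∧ y ∈ S ∧ z ∈ S ∧ x ≠ y ∧ x ≠ z ∧ y ≠ z ∧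
      r c x y = j ∧ r c x z = j ∧ r c y z = j := by
  have hne : S.Nonempty := Finset.card_pos.mp (by omega)
  obtain ⟨v, hv⟩ := hne
  set T := S.erase v with hT
  have hTcard : 5 ≤ T.card := by
    rw [hT, Finset.card_erase_of_mem hv]; omega
  have hsplit := Finset.card_filter_add_card_filter_not
    (s := T) (p := fun u => r c v u = true)
  have : ∃ i : Bool, 3 ≤ (T.filter (fun u => r c v u = i)).card := by
    by_cases h : 3 ≤ (T.filter (fun u => r c v u = true)).card
    · exact ⟨true, h⟩
    · refine ⟨false, ?_⟩
      have he : (T.filter (fun u => ¬ r c v u = true)) =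
          (T.filter (fun u => r c v u = false)) := by
        apply Finset.filter_congr; intro u _; simp
      rw [he] at hsplit
      omega
  obtain ⟨i, hi⟩ := this
  obtain ⟨t, ht, htc⟩ := Finset.exists_subset_card_eq hi
  obtain ⟨x, y, z, hxy, hxz, hyz, rfl⟩ := Finset.card_eq_three.mp htc
  have hx := ht (Finset.mem_insert_self x {y, z})
  have hy := ht (Finset.mem_insert_of_mem (Finset.mem_insert_self y {z}))
  have hz := ht (Finset.mem_insert_of_mem (Finset.mem_insert_of_mem (Finset.mem_singleton_self z)))
  rw [Finset.mem_filter] at hx hy hz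
  have hxS : x ∈ S := Finset.mem_of_mem_erase hx.1
  have hyS : y ∈ S := Finset.mem_of_mem_erase hy.1
  have hzS : z ∈ S := Finset.mem_of_mem_erase hz.1
  have hvx : v ≠ x := fun h => (Finset.ne_of_mem_erase hx.1) h.symm
  have hvy : v ≠ y := fun h => (Finset.ne_of_mem_erase hy.1) h.symm
  have hvz : v ≠ z := fun h => (Finset.ne_of_mem_erase hz.1) h.symm
  by_cases hxy' : r c x y = i
  · exact ⟨i, v, x, y, hv, hxS, hyS, hvx, hvy, hxy, hx.2, hy.2, hxy'⟩
  by_cases hxz' : r c x z = i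
  · exact ⟨i, v, x, z, hv, hxS, hzS, hvx, hvz, hxz, hx.2, hz.2, hxz'⟩
  by_cases hyz' : r c y z = i
  · exact ⟨i, v, y, z, hv, hyS, hzS, hvy, hvz, hyz, hy.2, hz.2, hyz'⟩
  exact ⟨!i, x, y, z, hxS, hyS, hzS, hxy, hxz, hyz,
    bool_ne _ _ hxy', bool_ne _ _ hxz', bool_ne _ _ hyz'⟩

end RamseyUp

namespace RamseyUp

/-- R(3,4) ≤ 9 : any 9-subset contains an `i`-triangle or a `!i`-clique of size 4. -/
lemma r34 (c : Finset (Fin 18) → Bool) (i : Bool) (S : Finset (Fin 18)) (h9 : S.card = 9) :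
    (∃ x y z : Fin 18, x ∈ S ∧ y ∈ S ∧ z ∈ S ∧ x ≠ y ∧ x ≠ z ∧ y ≠ z ∧
      r c x y = i ∧ r c x z = i ∧ r c y z = i) ∨
    (∃ w x y z : Fin 18, w ∈ S ∧ x ∈ S ∧ y ∈ S ∧ z ∈ S ∧
      w ≠ x ∧ w ≠ y ∧ w ≠ z ∧ x ≠ y ∧ x ≠ z ∧ y ≠ z ∧
      r c w x = !i ∧ r c w y = !i ∧ r c w z = !i ∧
      r c x y = !i ∧ r c x z = !i ∧ r c y z = !i) := by
  by_contra hcon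
  push_neg at hcon
  obtain ⟨noTri, noK4⟩ := hcon
  -- every vertex has i-degree exactly 3 within S
  have deg3 : ∀ v ∈ S, ((S.erase v).filter (fun u => r c v u = i)).card = 3 := by
    intro v hv
    set N := (S.erase v).filter (fun u => r c v u = i) with hN
    set M := (S.erase v).filter (fun u => ¬ r c v u = i) with hM
    have hsplit : N.card + M.card = 8 := by
      rw [hN, hM, Finset.card_filter_add_card_filter_not,
        Finset.card_erase_of_mem hv, h9]
    -- i-degree ≤ 3
    have hNle : N.card ≤ 3 := by
      by_contra hle
      obtain ⟨t, ht, htc⟩ := Finset.exists_subset_card_eq (show 4 ≤ N.card by omega)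
      obtain ⟨w, t', hwt', rfl, htc'⟩ := Finset.card_eq_succ.mp htc
      obtain ⟨x, y, z, hxy, hxz, hyz, rfl⟩ := Finset.card_eq_three.mp htc'
      have hw := ht (Finset.mem_insert_self w {x, y, z})
      have hx := ht (Finset.mem_insert_of_mem (Finset.mem_insert_self x {y, z}))
      have hy := ht (Finset.mem_insert_of_mem (Finset.mem_insert_of_mem
        (Finset.mem_insert_self y {z})))
      have hz := ht (Finset.mem_insert_of_mem (Finset.mem_insert_of_mem
        (Finset.mem_insert_of_mem (Finset.mem_singleton_self z))))
      rw [hN, Finset.mem_filter] at hw hx hy hz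
      have hwS := Finset.mem_of_mem_erase hw.1
      have hxS := Finset.mem_of_mem_erase hx.1
      have hyS := Finset.mem_of_mem_erase hy.1
      have hzS := Finset.mem_of_mem_erase hz.1
      have hvw : v ≠ w := fun h => (Finset.ne_of_mem_erase hw.1) h.symm
      have hvx : v ≠ x := fun h => (Finset.ne_of_mem_erase hx.1) h.symm
      have hvy : v ≠ y := fun h => (Finset.ne_of_mem_erase hy.1) h.symm
      have hvz : v ≠ z := fun h => (Finset.ne_of_mem_erase hz.1) h.symm
      have hwx : w ≠ x := fun h => hwt' (by simp [h])
      have hwy : w ≠ y := fun h => hwt' (by simp [h])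
      have hwz : w ≠ z := fun h => hwt' (by simp [h])
      -- if any pair among w x y z has color i, we get an i-triangle with v
      by_cases h1 : r c w x = i
      · exact noTri v w x hv hwS hxS hvw hvx hwx hw.2 hx.2 h1
      by_cases h2 : r c w y = i
      · exact noTri v w y hv hwS hyS hvw hvy hwy hw.2 hy.2 h2
      by_cases h3 : r c w z = i
      · exact noTri v w z hv hwS hzS hvw hvz hwz hw.2 hz.2 h3
      by_cases h4 : r c x y = i
      · exact noTri v x y hv hxS hyS hvx hvy hxy hx.2 hy.2 h4
      by_cases h5 : r c x z = i
      · exact noTri v x z hv hxS hzS hvx hvz hxz hx.2 hz.2 h5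
      by_cases h6 : r c y z = i
      · exact noTri v y z hv hyS hzS hvy hvz hyz hy.2 hz.2 h6
      exact noK4 w x y z hwS hxS hyS hzS hwx hwy hwz hxy hxz hyz
        (bool_ne _ _ h1) (bool_ne _ _ h2) (bool_ne _ _ h3)
        (bool_ne _ _ h4) (bool_ne _ _ h5) (bool_ne _ _ h6)
    -- !i-degree ≤ 5
    have hMle : M.card ≤ 5 := by
      by_contra hle
      obtain ⟨j, x, y, z, hx, hy, hz, hxy, hxz, hyz, rxy, rxz, ryz⟩ :=
        tri c M (by omega)
      rw [hM, Finset.mem_filter] at hx hy hz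
      have hxS := Finset.mem_of_mem_erase hx.1
      have hyS := Finset.mem_of_mem_erase hy.1
      have hzS := Finset.mem_of_mem_erase hz.1
      by_cases hj : j = i
      · exact noTri x y z hxS hyS hzS hxy hxz hyz (hj ▸ rxy) (hj ▸ rxz) (hj ▸ ryz)
      · have hji : j = !i := bool_ne _ _ hj
        have hvx : v ≠ x := fun h => (Finset.ne_of_mem_erase hx.1) h.symm
        have hvy : v ≠ y := fun h => (Finset.ne_of_mem_erase hy.1) h.symm
        have hvz : v ≠ z := fun h => (Finset.ne_of_mem_erase hz.1) h.symm
        exact noK4 v x y z hv hxS hyS hzS hvx hvy hvz hxy hxz hyz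
          (bool_ne _ _ hx.2) (bool_ne _ _ hy.2) (bool_ne _ _ hz.2)
          (hji ▸ rxy) (hji ▸ rxz) (hji ▸ ryz)
    omega
  -- parity contradiction
  set P := (S ×ˢ S).filter (fun p => p.1 ≠ p.2 ∧ r c p.1 p.2 = i) with hP
  have hfiber : ∀ v ∈ S, (P.filter (fun p => p.1 = v)).card = 3 := by
    intro v hv
    have himg : P.filter (fun p => p.1 = v) =
        ((S.erase v).filter (fun u => r c v u = i)).image (fun u => (v, u)) := by
      ext ⟨a, b⟩
      simp only [hP, Finset.mem_filter, Finset.mem_product, Finset.mem_image,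
        Finset.mem_erase]
      constructor
      · rintro ⟨⟨⟨haS, hbS⟩, hab, hr⟩, rfl⟩
        exact ⟨b, ⟨⟨fun h => hab h.symm, hbS⟩, hr⟩, rfl⟩
      · rintro ⟨u, ⟨⟨hub, huS⟩, hr⟩, h⟩
        obtain ⟨rfl, rfl⟩ := Prod.mk.injEq .. ▸ h
        exact ⟨⟨⟨hv, huS⟩, fun h => hub h.symm, hr⟩, rfl⟩
    rw [himg, Finset.card_image_of_injective _ (fun a b h => (Prod.mk.injEq _ _ _ _).mp h |>.2),
      deg3 v hv]
  have hPcard : P.card = 27 := by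
    rw [Finset.card_eq_sum_card_fiberwise (f := Prod.fst) (t := S)
      (fun p hp => by simp only [Finset.mem_coe, hP, Finset.mem_filter, Finset.mem_product] at hp; exact Finset.mem_coe.mpr hp.1.1)]
    rw [Finset.sum_congr rfl (fun v hv => hfiber v hv), Finset.sum_const, h9]
    rfl
  -- P has even cardinality via the swap involution
  have heven : P.card = 2 * (P.filter (fun p => p.1 < p.2)).card := by
    have hsplit : P.card = (P.filter (fun p => p.1 < p.2)).card +
        (P.filter (fun p => ¬ p.1 < p.2)).card :=
      (Finset.card_filter_add_card_filter_not _).symm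
    have hbij : (P.filter (fun p => ¬ p.1 < p.2)).card =
        (P.filter (fun p => p.1 < p.2)).card := by
      apply Finset.card_bij (fun p _ => Prod.swap p)
      · rintro ⟨a, b⟩ hp
        simp only [hP, Finset.mem_filter, Finset.mem_product] at hp ⊢
        obtain ⟨⟨⟨haS, hbS⟩, hab, hr⟩, hnlt⟩ := hp
        have hba : b < a := lt_of_le_of_ne (not_lt.mp hnlt) (fun h => hab h.symm)
        exact ⟨⟨⟨hbS, haS⟩, fun h => hab h.symm, (r_symm c a b) ▸ hr⟩, hba⟩
      · rintro ⟨a, b⟩ _ ⟨a', b'⟩ _ h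
        simpa [Prod.ext_iff, and_comm] using h
      · rintro ⟨a, b⟩ hp
        refine ⟨(b, a), ?_, rfl⟩
        simp only [hP, Finset.mem_filter, Finset.mem_product] at hp ⊢
        obtain ⟨⟨⟨haS, hbS⟩, hab, hr⟩, hlt⟩ := hp
        exact ⟨⟨⟨hbS, haS⟩, fun h => hab h.symm, (r_symm c a b) ▸ hr⟩, not_lt.mpr (le_of_lt hlt)⟩
    omega
  omega

end RamseyUp

namespace RamseyUp

lemma upper (c : Finset (Fin 18) → Bool) :
    ∃ H : Finset (Fin 18), H.card = 4 ∧ ∃ i : Bool, ∀ e ⊆ H, e.card = 2 → c e = i := by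
  set v : Fin 18 := 0 with hv
  set T := (Finset.univ : Finset (Fin 18)).erase v with hT
  have hTcard : T.card = 17 := by
    rw [hT, Finset.card_erase_of_mem (Finset.mem_univ v), Finset.card_univ]
    rfl
  have hsplit := Finset.card_filter_add_card_filter_not
    (s := T) (p := fun u => r c v u = true)
  have hex : ∃ i : Bool, 9 ≤ (T.filter (fun u => r c v u = i)).card := by
    by_cases h : 9 ≤ (T.filter (fun u => r c v u = true)).card
    · exact ⟨true, h⟩
    · refine ⟨false, ?_⟩
      have he : (T.filter (fun u => ¬ r c v u = true)) =
          (T.filter (fun u => r c v u = false)) := by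
        apply Finset.filter_congr; intro u _; simp
      rw [he] at hsplit
      omega
  obtain ⟨i, hi⟩ := hex
  obtain ⟨S, hSsub, hScard⟩ := Finset.exists_subset_card_eq hi
  have hmem : ∀ x ∈ S, x ≠ v ∧ r c v x = i := by
    intro x hx
    have := hSsub hx
    rw [Finset.mem_filter, hT, Finset.mem_erase] at this
    exact ⟨this.1.1, this.2⟩
  rcases r34 c i S hScard with ⟨x, y, z, hxS, hyS, hzS, hxy, hxz, hyz, rxy, rxz, ryz⟩ |
    ⟨w, x, y, z, hwS, hxS, hyS, hzS, hwx, hwy, hwz, hxy, hxz, hyz, h1, h2, h3, h4, h5, h6⟩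
  · obtain ⟨hxv, rvx⟩ := hmem x hxS
    obtain ⟨hyv, rvy⟩ := hmem y hyS
    obtain ⟨hzv, rvz⟩ := hmem z hzS
    exact pack c i v x y z (Ne.symm hxv) (Ne.symm hyv) (Ne.symm hzv) hxy hxz hyz
      rvx rvy rvz rxy rxz ryz
  · exact pack c (!i) w x y z hwx hwy hwz hxy hxz hyz h1 h2 h3 h4 h5 h6

end RamseyUp

set_option maxRecDepth 100000
set_option maxHeartbeats 10000000

namespace RamseyLow

def pf (a b : Fin 17) : Bool :=
  let d := (17 + a.val - b.val) % 17
  d = 1 || d = 2 || d = 4 || d = 8 || d = 9 || d = 13 || d = 15 || d = 16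

lemma pf_symm : ∀ a b : Fin 17, pf a b = pf b a := by decide
lemma pf_irrefl : ∀ a : Fin 17, pf a a = false := by decide

theorem low_check : ∀ a b c d : Fin 17, a < b → b < c → c < d → ∀ i : Bool,
    ¬(pf a b = i ∧ pf a c = i ∧ pf a d = i ∧ pf b c = i ∧ pf b d = i ∧ pf c d = i) := by
  decide

def pc (e : Finset (Fin 17)) : Bool :=
  decide (∃ x ∈ e, ∃ y ∈ e, pf x y = true)

lemma pc_pair (a b : Fin 17) : pc {a, b} = pf a b := by
  cases h : pf a b
  · apply decide_eq_false
    rintro ⟨x, hx, y, hy, hxy⟩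
    simp only [Finset.mem_insert, Finset.mem_singleton] at hx hy
    rcases hx with rfl | rfl <;> rcases hy with rfl | rfl
    · rw [pf_irrefl] at hxy; exact Bool.false_ne_true hxy
    · rw [h] at hxy; exact Bool.false_ne_true hxy
    · rw [pf_symm, h] at hxy; exact Bool.false_ne_true hxy
    · rw [pf_irrefl] at hxy; exact Bool.false_ne_true hxy
  · exact decide_eq_true ⟨a, Finset.mem_insert_self a {b},
      b, Finset.mem_insert_of_mem (Finset.mem_singleton_self b), h⟩

lemma lower : ¬ ∃ H : Finset (Fin 17), H.card = 4 ∧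
    ∃ i : Bool, ∀ e ⊆ H, e.card = 2 → pc e = i := by
  rintro ⟨H, h4, i, hmono⟩
  have hlen : (H.sort (· ≤ ·)).length = 4 := by rw [Finset.length_sort, h4]
  rcases hl : H.sort (· ≤ ·) with _ | ⟨a, _ | ⟨b, _ | ⟨c, _ | ⟨d, _ | ⟨e, l⟩⟩⟩⟩⟩ <;>
    rw [hl] at hlen <;> simp at hlen
  have hs := (Finset.sortedLT_sort H).pairwise
  rw [hl] at hs
  simp only [List.pairwise_cons, List.mem_cons, List.mem_singleton, List.not_mem_nil] at hs
  obtain ⟨hsa, hsb, hsc, -⟩ := hs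
  have hab : a < b := hsa b (by simp)
  have hac : a < c := hsa c (by simp)
  have had : a < d := hsa d (by simp)
  have hbc : b < c := hsb c (by simp)
  have hbd : b < d := hsb d (by simp)
  have hcd : c < d := hsc d (by simp)
  have hmem : ∀ x : Fin 17, x ∈ [a, b, c, d] → x ∈ H := by
    intro x hx; rw [← Finset.mem_sort (· ≤ ·), hl]; exact hx
  have haH := hmem a (by simp); have hbH := hmem b (by simp)
  have hcH := hmem c (by simp); have hdH := hmem d (by simp)
  have key : ∀ p q : Fin 17, p ∈ H → q ∈ H → p ≠ q → pf p q = i := by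
    intro p q hp hq hpq
    rw [← pc_pair]
    exact hmono {p, q} (Finset.insert_subset hp (Finset.singleton_subset_iff.mpr hq))
      (Finset.card_pair hpq)
  exact low_check a b c d hab hbc hcd i
    ⟨key a b haH hbH hab.ne, key a c haH hcH hac.ne, key a d haH hdH had.ne,
     key b c hbH hcH hbc.ne, key b d hbH hdH hbd.ne, key c d hcH hdH hcd.ne⟩

end RamseyLow

/-- Every 2-coloring of the 2-element subsets of an 18-element set contains a
monochromatic subset of size 4, and there is a 2-coloring of the 2-element
subsets of a 17-element set with no monochromatic subset of size 4; that is,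
the Ramsey number N(2,4) = 18. -/
theorem ramsey_N24_eq_eighteen :
    (∀ c : Finset (Fin 18) → Bool,
      ∃ H : Finset (Fin 18), H.card = 4 ∧
        ∃ i : Bool, ∀ e ⊆ H, e.card = 2 → c e = i) ∧
    (∃ c : Finset (Fin 17) → Bool,
      ¬ ∃ H : Finset (Fin 17), H.card = 4 ∧
        ∃ i : Bool, ∀ e ⊆ H, e.card = 2 → c e = i) := by
  exact ⟨RamseyUp.upper, RamseyLow.pc, RamseyLow.lower⟩
end

section
/- (Finite Ramsey Theorem) For all positive integers r, n, h there exists an integer k such that every r-coloring of the n-element subsets of any set of size at least k contains a monochromatic subset of size h. -/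
/-! Infinite Ramsey theorem plus compactness. For colorings of `Finset ℕ` one picks, by induction
on `n`, an increasing sequence `a₀ < a₁ < ⋯` such that the color of `{aₖ} ∪ e`, for `e` an
`n`-set of later terms, depends only on `k`; an infinite subsequence on which this color is
constant is monochromatic. If the finite statement failed, counterexample colorings of `Fin k`
for every `k` would have a limit along a nonprincipal ultrafilter, and a finite monochromatic
set of this limit coloring is already monochromatic for one of the counterexamples. -/

open Finset Filter Function

variable {α β κ : Type*}

def IsMonochromaticOn (c : Finset α → κ) (n : ℕ) (T : Set α) (i : κ) : Prop :=
  ∀ e : Finset α, ↑e ⊆ T → e.card = n → c e = i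

namespace IsMonochromaticOn

variable {c : Finset β → κ} {n : ℕ} {i : κ}

theorem mono {S T : Set β} (h : IsMonochromaticOn c n T i) (hST : S ⊆ T) :
    IsMonochromaticOn c n S i :=
  fun e he hn => h e (he.trans hST) hn

theorem of_comap (f : α ↪ β) {T : Set α} (h : IsMonochromaticOn (fun e => c (e.map f)) n T i) :
    IsMonochromaticOn c n (f '' T) i := by
  classical
  intro e he hn
  obtain ⟨e, heT, rfl⟩ := Finset.subset_set_image_iff.mp he
  rw [← map_eq_image] at hn ⊢
  exact h e heT (by rwa [card_map] at hn)

end IsMonochromaticOn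

section InfiniteRamsey

variable {n : ℕ} {c : Finset ℕ → κ}

theorem isMonochromaticOn_succ_image_of_insert {a : ℕ → ℕ} (ha : StrictMono a) {col : ℕ → κ}
    (hcol : ∀ k, IsMonochromaticOn (fun e => c (insert (a k) e)) n (a '' Set.Ioi k) (col k))
    (i : κ) : IsMonochromaticOn c (n + 1) (a '' (col ⁻¹' {i})) i := by
  intro e he hn
  have hne : e.Nonempty := card_pos.mp (by omega)
  obtain ⟨k, hk, hkm⟩ := he (e.min'_mem hne)
  have hrest : ↑(e.erase (a k)) ⊆ a '' Set.Ioi k := by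
    intro x hx
    obtain ⟨hxm, hxe⟩ := mem_erase.mp hx
    obtain ⟨j, -, rfl⟩ := he hxe
    refine ⟨j, ha.lt_iff_lt.mp ?_, rfl⟩
    exact hkm ▸ lt_of_le_of_ne (e.min'_le _ hxe) (hkm ▸ hxm.symm)
  have hmem : a k ∈ e := hkm ▸ e.min'_mem hne
  rw [← insert_erase hmem]
  exact (hcol k _ hrest (by rw [card_erase_of_mem hmem, hn]; rfl)).trans hk

theorem exists_insert_isMonochromaticOn
    (ih : ∀ (c : Finset ℕ → κ) (S : Set ℕ), S.Infinite →
      ∃ T ⊆ S, T.Infinite ∧ ∃ i, IsMonochromaticOn c n T i)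
    (c : Finset ℕ → κ) {S : Set ℕ} (hS : S.Infinite) :
    ∃ a ∈ S, ∃ T ⊆ S ∩ Set.Ioi a, T.Infinite ∧
      ∃ i, IsMonochromaticOn (fun e => c (insert a e)) n T i := by
  obtain ⟨a, ha⟩ := hS.nonempty
  have hS' : (S ∩ Set.Ioi a).Infinite := by
    simpa only [Set.sdiff_eq, Set.compl_Iic] using hS.sdiff (Set.finite_Iic a)
  exact ⟨a, ha, ih (fun e => c (insert a e)) _ hS'⟩

theorem exists_strictMono_insert_isMonochromaticOn
    (ih : ∀ (c : Finset ℕ → κ) (S : Set ℕ), S.Infinite →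
      ∃ T ⊆ S, T.Infinite ∧ ∃ i, IsMonochromaticOn c n T i)
    (c : Finset ℕ → κ) {S : Set ℕ} (hS : S.Infinite) :
    ∃ a : ℕ → ℕ, StrictMono a ∧ Set.range a ⊆ S ∧ ∃ col : ℕ → κ,
      ∀ k, IsMonochromaticOn (fun e => c (insert (a k) e)) n (a '' Set.Ioi k) (col k) := by
  have : Nonempty κ := let ⟨_, _, _, i, _⟩ := ih c S hS; ⟨i⟩
  choose! a ha T hTS hT col hcol using fun (S : Set ℕ) (hS : S.Infinite) =>
    exists_insert_isMonochromaticOn ih c hS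
  set Ss : ℕ → Set ℕ := fun k => T^[k] S with hSs
  have hSs_succ : ∀ k, Ss (k + 1) = T (Ss k) := fun k => iterate_succ_apply' T k S
  have hinf : ∀ k, (Ss k).Infinite := by
    intro k
    induction k with
    | zero => exact hS
    | succ k ih => exact hSs_succ k ▸ hT _ ih
  have hstep : ∀ k, Ss (k + 1) ⊆ Ss k ∩ Set.Ioi (a (Ss k)) := fun k =>
    hSs_succ k ▸ hTS _ (hinf k)
  have hanti : Antitone Ss := antitone_nat_of_succ_le fun k => (hstep k).trans Set.inter_subset_left
  have hlater : ∀ k j, k < j → a (Ss j) ∈ Ss (k + 1) := fun k j hkj => hanti hkj (ha _ (hinf j))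
  refine ⟨fun k => a (Ss k), fun k j hkj => (hstep k (hlater k j hkj)).2, ?_,
    fun k => col (Ss k), fun k => (hcol _ (hinf k)).mono ?_⟩
  · rintro _ ⟨k, rfl⟩
    exact hanti (Nat.zero_le k) (ha _ (hinf k))
  · rintro _ ⟨j, hkj, rfl⟩
    exact hSs_succ k ▸ hlater k j hkj

theorem exists_infinite_isMonochromaticOn [Finite κ] (n : ℕ) (c : Finset ℕ → κ) {S : Set ℕ}
    (hS : S.Infinite) : ∃ T ⊆ S, T.Infinite ∧ ∃ i, IsMonochromaticOn c n T i := by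
  induction n generalizing c S with
  | zero =>
    exact ⟨S, subset_rfl, hS, c ∅, fun e _ he => by rw [card_eq_zero.mp he]⟩
  | succ n ih =>
    obtain ⟨a, ha, haS, col, hcol⟩ := exists_strictMono_insert_isMonochromaticOn ih c hS
    obtain ⟨i, hi⟩ := Finite.exists_infinite_fiber col
    refine ⟨a '' (col ⁻¹' {i}), (Set.image_subset_range _ _).trans haS,
      (Set.infinite_coe_iff.mp hi).image ha.injective.injOn, i, ?_⟩
    exact isMonochromaticOn_succ_image_of_insert ha hcol i

end InfiniteRamsey

/-- `PartitionArrow α κ n h` is the arrow relation `α → (h)ⁿ_κ` of Erdős and Rado. -/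
def PartitionArrow (α κ : Type*) (n h : ℕ) : Prop :=
  ∀ c : Finset α → κ, ∃ H : Finset α, H.card = h ∧ ∃ i, IsMonochromaticOn c n H i

theorem PartitionArrow.of_embedding {n h : ℕ} (hα : PartitionArrow α κ n h) (f : α ↪ β) :
    PartitionArrow β κ n h := fun c => by
  obtain ⟨H, hH, i, hi⟩ := hα fun e => c (e.map f)
  exact ⟨H.map f, by rw [card_map, hH], i, by simpa only [coe_map] using hi.of_comap f⟩

theorem Ultrafilter.exists_forall_eventually_eq {ι : Type*} [Finite κ] (U : Ultrafilter ι)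
    (f : ι → β → κ) : ∃ g : β → κ, ∀ b, ∀ᶠ k in U, f k b = g b := by
  choose g hg using fun b => (U.map (f · b)).eq_pure_of_finite
  refine ⟨g, fun b => ?_⟩
  have : {g b} ∈ U.map (f · b) := by rw [hg b]; exact Set.mem_singleton _
  exact Ultrafilter.mem_map.mp this

theorem IsMonochromaticOn.exists_fin {k n : ℕ} {c : Finset (Fin k) → κ} {H : Finset ℕ} {i : κ}
    (hHk : ∀ x ∈ H, x < k)
    (hH : IsMonochromaticOn (fun e => c {x | (x : ℕ) ∈ e}) n H i) :
    ∃ H' : Finset (Fin k), H'.card = H.card ∧ IsMonochromaticOn c n H' i := by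
  have hmap : ({x | (x : ℕ) ∈ H} : Finset (Fin k)).map Fin.valEmbedding = H := by
    ext x
    simp only [Finset.mem_map, mem_filter_univ, Fin.valEmbedding_apply]
    exact ⟨fun ⟨y, hy, hyx⟩ => hyx ▸ hy, fun hx => ⟨⟨x, hHk x hx⟩, hx, rfl⟩⟩
  refine ⟨({x | (x : ℕ) ∈ H} : Finset (Fin k)), by rw [← card_map Fin.valEmbedding, hmap], ?_⟩
  intro e he hn
  have hrestrict : ({x | (x : ℕ) ∈ e.map Fin.valEmbedding} : Finset (Fin k)) = e := by
    ext x
    simp only [mem_filter_univ]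
    exact mem_map' Fin.valEmbedding
  rw [← hrestrict]
  refine hH (e.map Fin.valEmbedding) ?_ (by rwa [card_map])
  rw [← hmap, coe_map, coe_map]
  exact Set.image_mono he

theorem exists_partitionArrow_fin [Finite κ] (n h : ℕ) : ∃ k, PartitionArrow (Fin k) κ n h := by
  by_contra! hcon
  simp only [PartitionArrow, not_forall, not_exists, not_and] at hcon
  choose cc hcc using hcon
  let d : ℕ → Finset ℕ → κ := fun k e => cc k {x | (x : ℕ) ∈ e}
  obtain ⟨D, hD⟩ := (hyperfilter ℕ).exists_forall_eventually_eq d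
  obtain ⟨T, -, hT, i, hi⟩ := exists_infinite_isMonochromaticOn n D Set.infinite_univ
  obtain ⟨H, hHT, rfl⟩ := hT.exists_subset_card_eq h
  have hbig : ∀ᶠ k in hyperfilter ℕ, ∀ x ∈ H, x < k :=
    (eventually_all_finset H).2 fun x _ => Nat.hyperfilter_le_atTop (eventually_gt_atTop x)
  have hagree : ∀ᶠ k in hyperfilter ℕ, ∀ e ∈ H.powersetCard n, d k e = i :=
    (eventually_all_finset _).2 fun e he => (hD e).mono fun k hk => hk.trans <|
      hi e ((coe_subset.mpr (mem_powersetCard.mp he).1).trans hHT) (mem_powersetCard.mp he).2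
  obtain ⟨k, hHk, hdk⟩ := (hbig.and hagree).exists
  obtain ⟨H', hH', hmono⟩ := IsMonochromaticOn.exists_fin (c := cc k) hHk
    fun e he hn => hdk e (mem_powersetCard.mpr ⟨coe_subset.mp he, hn⟩)
  exact hcc k H' hH' i hmono

theorem finite_ramsey_general (r n h : ℕ) :
    ∃ k : ℕ,
      ∀ (V : Type) [DecidableEq V] [Fintype V], k ≤ Fintype.card V →
        ∀ c : Finset V → Fin r,
          ∃ H : Finset V, H.card = h ∧
            ∃ i : Fin r, ∀ e ⊆ H, e.card = n → c e = i := by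
  obtain ⟨k, hk⟩ := exists_partitionArrow_fin (κ := Fin r) n h
  refine ⟨k, fun V _ _ hV c => ?_⟩
  obtain ⟨f⟩ : Nonempty (Fin k ↪ V) :=
    Function.Embedding.nonempty_of_card_le (by rwa [Fintype.card_fin])
  obtain ⟨H, hH, i, hi⟩ := hk.of_embedding f c
  exact ⟨H, hH, i, fun e he => hi e (coe_subset.mpr he)⟩

/-- (Finite Ramsey Theorem) For all positive integers r, n, h there exists an
integer k such that every r-coloring of the n-element subsets of any set of
size at least k contains a monochromatic subset of size h. -/
theorem finite_ramsey (r n h : ℕ) (hr : 0 < r) (hn : 0 < n) (hh : 0 < h) :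
    ∃ k : ℕ,
      ∀ (V : Type) [DecidableEq V] [Fintype V], k ≤ Fintype.card V →
        ∀ c : Finset V → Fin r,
          ∃ H : Finset V, H.card = h ∧
            ∃ i : Fin r, ∀ e ⊆ H, e.card = n → c e = i :=
  finite_ramsey_general r n h
end

section
/- (Strengthened Ramsey Theorem, Paris–Harrington statement) For all positive integers r, n, h there exists an integer k with the following property: every r-coloring of the n-element subsets of {1, 2, ..., k} contains a monochromatic subset H ⊆ {1, 2, ..., k} such that |H| ≥ h and |H| ≥ min(H). -/
-- one step lemma
theorem PH_step {r n : ℕ}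
    (IH : ∀ (c : Finset ℕ → Fin r) (S : Set ℕ), S.Infinite →
      ∃ M ⊆ S, M.Infinite ∧ ∃ i, ∀ e : Finset ℕ, ↑e ⊆ M → e.card = n → c e = i)
    (c : Finset ℕ → Fin r) (T : Set ℕ) (hT : T.Infinite) :
    ∃ a ∈ T, ∃ T' ⊆ T, T'.Infinite ∧ (∀ x ∈ T', a < x) ∧
      ∃ i, ∀ e : Finset ℕ, ↑e ⊆ T' → e.card = n → c (insert a e) = i := by
  obtain ⟨a, ha⟩ := hT.nonempty
  have h2 : (T ∩ Set.Ioi a).Infinite := by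
    have := hT.diff (Set.finite_Iic a)
    apply this.mono
    intro x hx
    exact ⟨hx.1, by simpa using hx.2⟩
  obtain ⟨M, hMsub, hMinf, i, hi⟩ := IH (fun e => c (insert a e)) _ h2
  exact ⟨a, ha, M, fun x hx => (hMsub hx).1, hMinf, fun x hx => (hMsub hx).2, i, hi⟩

theorem PH_ramseyInf (n : ℕ) {r : ℕ} (c : Finset ℕ → Fin r) (S : Set ℕ) (hS : S.Infinite) :
    ∃ M ⊆ S, M.Infinite ∧ ∃ i, ∀ e : Finset ℕ, ↑e ⊆ M → e.card = n → c e = i := by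
  induction n generalizing c S with
  | zero =>
    refine ⟨S, le_refl _, hS, c ∅, fun e _ he => ?_⟩
    rw [Finset.card_eq_zero] at he; rw [he]
  | succ n IH =>
    -- build the sequence of states
    classical
    let St := {T : Set ℕ // T.Infinite}
    have step : ∀ T : St, ∃ p : ℕ × Fin r × St, p.1 ∈ T.1 ∧ p.2.2.1 ⊆ T.1 ∧
        (∀ x ∈ p.2.2.1, p.1 < x) ∧
        ∀ e : Finset ℕ, ↑e ⊆ p.2.2.1 → e.card = n → c (insert p.1 e) = p.2.1 := by
      intro T
      obtain ⟨a, ha, T', hsub, hinf, hlt, i, hi⟩ := PH_step IH c T.1 T.2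
      exact ⟨⟨a, i, ⟨T', hinf⟩⟩, ha, hsub, hlt, hi⟩
    choose next hmem hsub hlt hcol using step
    let Tseq : ℕ → St := fun k => Nat.rec ⟨S, hS⟩ (fun _ T => (next T).2.2) k
    have hTsucc : ∀ k, Tseq (k + 1) = (next (Tseq k)).2.2 := fun k => rfl
    let a : ℕ → ℕ := fun k => (next (Tseq k)).1
    let col : ℕ → Fin r := fun k => (next (Tseq k)).2.1
    have ha_mem : ∀ k, a k ∈ (Tseq k).1 := fun k => hmem _
    have hnest : ∀ k j, k ≤ j → (Tseq j).1 ⊆ (Tseq k).1 := by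
      intro k j hkj
      induction j with
      | zero => simp_all
      | succ j IH2 =>
        rcases Nat.lt_or_ge k (j+1) with h' | h'
        · exact ((hsub (Tseq j)).trans (IH2 (Nat.lt_succ_iff.mp h')))
        · have : k = j + 1 := le_antisymm hkj h'
          subst this; exact fun x hx => hx
    have hamono : StrictMono a := by
      have h1 : ∀ k j, k < j → a k < a j := by
        intro k j hkj
        have : a j ∈ (Tseq (k+1)).1 := hnest _ _ hkj (ha_mem j)
        exact hlt (Tseq k) _ this
      exact fun k j h => h1 k j h
    -- pigeonhole on colors
    have : ∃ i : Fin r, {k | col k = i}.Infinite := by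
      by_contra hcon
      push_neg at hcon
      have : (Set.univ : Set ℕ).Finite := by
        have : (Set.univ : Set ℕ) ⊆ ⋃ i : Fin r, {k | col k = i} := by
          intro k _; exact Set.mem_iUnion.2 ⟨col k, rfl⟩
        exact (Set.finite_iUnion hcon).subset this
      exact Set.infinite_univ this
    obtain ⟨i, hKinf⟩ := this
    refine ⟨a '' {k | col k = i}, ?_, hKinf.image (hamono.injective.injOn), i, ?_⟩
    · rintro x ⟨k, _, rfl⟩
      exact hnest 0 k (Nat.zero_le k) (ha_mem k)
    · intro e hesub hecard
      have hne : e.Nonempty := by rw [← Finset.card_pos, hecard]; omega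
      obtain ⟨k, hki, hxe⟩ := hesub (e.min'_mem hne)
      have herase : ↑(e.erase (e.min' hne)) ⊆ (Tseq (k+1)).1 := by
        intro y hy
        have hy' := Finset.mem_coe.mp hy
        obtain ⟨j, _, rfl⟩ := hesub (Finset.mem_of_mem_erase hy')
        have hne' : a j ≠ a k := by rw [hxe]; exact Finset.ne_of_mem_erase hy'
        have : a k < a j := lt_of_le_of_ne
          (hxe ▸ e.min'_le _ (Finset.mem_of_mem_erase hy')) (Ne.symm hne')
        have : k < j := hamono.lt_iff_lt.mp this
        exact hnest (k+1) j this (ha_mem j)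
      have hcard' : (e.erase (e.min' hne)).card = n := by
        rw [Finset.card_erase_of_mem (e.min'_mem hne), hecard]; omega
      have h5 := hcol (Tseq k) _ herase hcard'
      have h6 : (next (Tseq k)).1 = a k := rfl
      rw [h6, hxe, Finset.insert_erase (e.min'_mem hne)] at h5
      rw [h5]; exact hki

/-- (Strengthened Ramsey Theorem, Paris–Harrington) For all positive integers
r, n, h there is an integer k such that every r-coloring of the n-element
subsets of {1, 2, …, k} contains a monochromatic subset H ⊆ {1, …, k} with
|H| ≥ h and |H| ≥ min(H). -/
theorem paris_harrington (r n h : ℕ) (hr : 0 < r) (hn : 0 < n) (hh : 0 < h) :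
    ∃ k : ℕ, ∀ c : Finset ℕ → Fin r,
      ∃ H : Finset ℕ, H ⊆ Finset.Icc 1 k ∧
        (∃ i : Fin r, ∀ e ⊆ H, e.card = n → c e = i) ∧
        h ≤ H.card ∧ H.min ≤ (H.card : ℕ∞) := by
  by_contra hcon
  push_neg at hcon
  choose cc hcc using hcon
  set U := Filter.hyperfilter ℕ with hU
  have hlim : ∀ e : Finset ℕ, ∃ v : Fin r, {k | cc k e = v} ∈ U := by
    intro e
    have : Nonempty (Fin r) := ⟨⟨0, hr⟩⟩
    obtain ⟨v, hv⟩ := Ultrafilter.eq_pure_of_finite (U.map (fun k => cc k e))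
    refine ⟨v, ?_⟩
    have h1 : {v} ∈ (U.map (fun k => cc k e) : Filter (Fin r)) := by
      rw [hv]; exact Filter.mem_pure.mpr rfl
    have h2 := Ultrafilter.mem_map.mp h1
    exact h2
  choose C hC using hlim
  obtain ⟨M, hMsub, hMinf, i, hMi⟩ := PH_ramseyInf n C (Set.Ici 1) (Set.Ici_infinite 1)
  obtain ⟨x0, hx0⟩ := hMinf.nonempty
  set t := max h x0 with ht
  obtain ⟨H1, hH1sub, hH1card⟩ :=
    ((hMinf.diff (Set.finite_Iic x0))).exists_subset_card_eq (t - 1)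
  set H : Finset ℕ := insert x0 H1 with hHdef
  have hx0nH1 : x0 ∉ H1 := by
    intro hmem
    have := hH1sub hmem
    exact this.2 (Set.mem_Iic.mpr le_rfl)
  have hHM : ↑H ⊆ M := by
    intro x hx
    rcases Finset.mem_insert.mp hx with rfl | hx'
    · exact hx0
    · exact (hH1sub hx').1
  have hHcard : H.card = t := by
    rw [hHdef, Finset.card_insert_of_notMem hx0nH1, hH1card]
    have : 1 ≤ t := le_trans hh (le_max_left _ _)
    omega
  have hmono : ∀ e ⊆ H, e.card = n → C e = i := by
    intro e he hce
    exact hMi e (le_trans (Finset.coe_subset.mpr he) hHM) hce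
  -- find a single k where cc k agrees with C on all n-subsets of H and k is big
  have hagree : ∀ᶠ k in (U : Filter ℕ), ∀ e ∈ H.powersetCard n, cc k e = C e :=
    (Filter.eventually_all_finset _).mpr (fun e _ => hC e)
  have hbig : ∀ᶠ k in (U : Filter ℕ), H.sup id ≤ k :=
    Nat.hyperfilter_le_atTop (Filter.eventually_atTop.mpr ⟨H.sup id, fun k hk => hk⟩)
  obtain ⟨k, hk1, hk2⟩ := (hagree.and hbig).exists
  have hHsub : H ⊆ Finset.Icc 1 k := by
    intro x hx
    refine Finset.mem_Icc.mpr ⟨hMsub (hHM hx), le_trans (Finset.le_sup (f := id) hx) hk2⟩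
  have hmonok : ∀ e ⊆ H, e.card = n → cc k e = i := by
    intro e he hce
    rw [hk1 e (Finset.mem_powersetCard.mpr ⟨he, hce⟩)]
    exact hmono e he hce
  have hhc : h ≤ H.card := by rw [hHcard]; exact le_max_left _ _
  have hminc : H.min ≤ (H.card : ℕ∞) := by
    refine le_trans (Finset.min_le (Finset.mem_insert_self x0 H1)) ?_
    have : x0 ≤ H.card := by rw [hHcard]; exact le_max_right _ _
    exact Nat.cast_le.mpr this
  exact absurd hminc (by simpa using hcc k H hHsub ⟨i, hmonok⟩ hhc)
end

section
/- For every positive integer m, every 2-coloring (red/blue) of the 2-element subsets of a well-ordered set of order type ω² either contains a subset of size m all of whose 2-element subsets are red, or contains a subset of order type ω² all of whose 2-element subsets are blue. Moreover ω² is the least ordinal with this property, i.e. f(m, ω²) = ω² for each integer m > 0 (if m ≥ 2: for every ordinal γ < ω² there is a 2-coloring of the 2-element subsets of a well-order of type γ with neither a red subset of size m nor a blue subset of order type ω²). -/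
open Filter

namespace FOmSq

/-- Choose a sequence where each term lies in a set determined by the list of
previous terms. -/
theorem exists_chain {α : Type*} (S : List α → Set α) (hS : ∀ l, (S l).Nonempty) :
    ∃ f : ℕ → α, ∀ r, f r ∈ S ((List.range r).map f) := by
  choose pick hpick using hS
  let g : ℕ → List α := fun r => Nat.rec [] (fun _ l => l ++ [pick l]) r
  refine ⟨fun r => pick (g r), fun r => ?_⟩
  have key : (List.range r).map (fun r => pick (g r)) = g r := by
    induction r with
    | zero => rfl
    | succ n ih => rw [List.range_succ, List.map_append, ih, List.map_singleton]
  rw [key]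
  exact hpick (g r)

/-- `l.getD s (0,0)`-style access abbreviation. -/
def D {α : Type*} [Inhabited α] (l : List α) (s : ℕ) : α := l.getD s default

theorem D_append_lt {α : Type*} [Inhabited α] (l l' : List α) {s : ℕ} (h : s < l.length) :
    D (l ++ l') s = D l s := by
  simp only [D, List.getD_eq_getElem?_getD, List.getElem?_append_left h]

theorem D_concat_length {α : Type*} [Inhabited α] (l : List α) (x : α) :
    D (l ++ [x]) l.length = x := by
  simp only [D, List.getD_eq_getElem?_getD, List.getElem?_concat_length, Option.getD_some]

theorem D_range_map {α : Type*} [Inhabited α] (f : ℕ → α) {s t : ℕ} (h : s < t) :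
    D ((List.range t).map f) s = f s := by
  simp only [D, List.getD_eq_getElem?_getD, List.getElem?_map, List.getElem?_range, h,
    Option.map_some, Option.getD_some]

section Ultra

variable (U : Ultrafilter ℕ) (C : ℕ × ℕ → ℕ × ℕ → Bool)

/-- `p` is blue to `U`-most points of column `n`. -/
def hbl (p : ℕ × ℕ) (n : ℕ) : Prop := {j | C p (n, j) = false} ∈ U

/-- `p` is blue to `U`-most columns. -/
def good (p : ℕ × ℕ) : Prop := {n | hbl U C p n} ∈ U

/-- `U`-most points of column `n` are blue to `U`-most of column `n'`. -/
def db (n n' : ℕ) : Prop := {j | hbl U C (n, j) n'} ∈ U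

/-- A column is fully adequate. -/
def okc (n : ℕ) : Prop :=
  db U C n n ∧ {j | good U C (n, j)} ∈ U ∧
    {n' | db U C n n'} ∈ U ∧ {n' | db U C n' n} ∈ U

variable {U C}

theorem mem_U_of_not_mem {s : Set ℕ} (h : s ∉ U) : {n | n ∉ s} ∈ U := by
  have := (Ultrafilter.compl_mem_iff_notMem (f := U) (s := s)).2 h
  simpa [Set.compl_def] using this

theorem not_hbl {p : ℕ × ℕ} {n : ℕ} (h : ¬ hbl U C p n) : {j | C p (n, j) = true} ∈ U := by
  have h2 := mem_U_of_not_mem (U := U) h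
  have he : {m | m ∉ {j | C p (n, j) = false}} = {j | C p (n, j) = true} := by
    ext j
    show ¬(C p (n, j) = false) ↔ C p (n, j) = true
    simp
  rwa [he] at h2

theorem not_db {n n' : ℕ} (h : ¬ db U C n n') : {j | ¬ hbl U C (n, j) n'} ∈ U :=
  mem_U_of_not_mem h

theorem not_good {p : ℕ × ℕ} (h : ¬ good U C p) : {n | ¬ hbl U C p n} ∈ U :=
  mem_U_of_not_mem h

theorem U_forall_lt (t : ℕ) (Q : ℕ → ℕ → Prop) (h : ∀ s, s < t → {n | Q s n} ∈ U) :
    {n | ∀ s, s < t → Q s n} ∈ U := by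
  induction t with
  | zero =>
    have : {n : ℕ | ∀ s, s < 0 → Q s n} = Set.univ := by ext n; simp
    rw [this]; exact Filter.univ_mem
  | succ t ih =>
    have h1 : {n | ∀ s, s < t → Q s n} ∈ U := ih (fun s hs => h s (hs.trans (Nat.lt_succ_self t)))
    have h2 := h t (Nat.lt_succ_self t)
    filter_upwards [h1, h2] with n hn1 hn2 s hs
    rcases Nat.lt_succ_iff_lt_or_eq.1 hs with hs | rfl
    · exact hn1 s hs
    · exact hn2

theorem U_gt (hU : (U : Filter ℕ) ≤ cofinite) (b : ℕ) : {n | b < n} ∈ U := by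
  apply hU
  rw [Filter.mem_cofinite]
  have : {n : ℕ | b < n}ᶜ = Set.Iic b := by ext n; simp [Nat.not_lt]
  rw [this]; exact Set.finite_Iic b

theorem U_imp {P : Prop} {s : Set ℕ} (h : P → s ∈ U) : {n | P → n ∈ s} ∈ U := by
  by_cases hP : P
  · filter_upwards [h hP] with n hn _; exact hn
  · filter_upwards with n hn; exact absurd hn hP

end Ultra


theorem run_chain {α : Type*} [Inhabited α] (Inv : List α → Prop) (Big : List α → Set α)
    (h0 : Inv []) (hne : ∀ l, Inv l → (Big l).Nonempty)
    (hstep : ∀ l x, Inv l → x ∈ Big l → Inv (l ++ [x])) :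
    ∃ f : ℕ → α, ∀ t, Inv ((List.range t).map f) ∧ f t ∈ Big ((List.range t).map f) := by
  classical
  set S : List α → Set α := fun l => if Inv l then Big l else Set.univ with hs
  have hSne : ∀ l, (S l).Nonempty := by
    intro l
    by_cases h : Inv l
    · simpa [hs, h] using hne l h
    · simp [hs, h]
  obtain ⟨f, hf⟩ := exists_chain S hSne
  have hInv : ∀ t, Inv ((List.range t).map f) := by
    intro t
    induction t with
    | zero => simpa using h0
    | succ t ih =>
      rw [List.range_succ, List.map_append, List.map_singleton]
      refine hstep _ _ ih ?_
      have := hf t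
      simp only [hs, if_pos ih] at this
      exact this
  refine ⟨f, fun t => ⟨hInv t, ?_⟩⟩
  have := hf t
  simp only [hs, if_pos (hInv t)] at this
  exact this

section Red

variable {U : Ultrafilter ℕ} {C : ℕ × ℕ → ℕ × ℕ → Bool}

/-- Red clique from a bad within-column behaviour. -/
theorem red1 (hU : (U : Filter ℕ) ≤ cofinite) {n : ℕ} (hn : ¬ db U C n n) (m : ℕ) :
    ∃ g : ℕ → ℕ × ℕ, ∀ r r', r < r' → r' < m →
      C (g r) (g r') = true ∧ g r ≠ g r' := by
  set Inv : List ℕ → Prop := fun l =>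
    (∀ s, s < l.length → ¬ hbl U C (n, D l s) n) ∧
    (∀ s s', s < s' → s' < l.length → C (n, D l s) (n, D l s') = true ∧ D l s < D l s')
    with hInvDef
  set Big : List ℕ → Set ℕ := fun l =>
    {k | ¬ hbl U C (n, k) n} ∩ ({k | ∀ s, s < l.length → C (n, D l s) (n, k) = true}
      ∩ {k | ∀ s, s < l.length → D l s < k}) with hBigDef
  have h0 : Inv [] := by constructor <;> intro s <;> simp
  have hne : ∀ l, Inv l → (Big l).Nonempty := by
    intro l hl
    refine Ultrafilter.nonempty_of_mem (Filter.inter_mem (not_db hn) (Filter.inter_mem ?_ ?_))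
    · exact U_forall_lt _ _ fun s hs => not_hbl (hl.1 s hs)
    · exact U_forall_lt _ _ fun s hs => U_gt hU _
  have hstep : ∀ l x, Inv l → x ∈ Big l → Inv (l ++ [x]) := by
    intro l x hl hx
    obtain ⟨hx1, hx2, hx3⟩ := hx
    have hlen : (l ++ [x]).length = l.length + 1 := by simp
    constructor
    · intro s hs
      rw [hlen] at hs
      rcases Nat.lt_succ_iff_lt_or_eq.1 hs with h | rfl
      · rw [D_append_lt _ _ h]; exact hl.1 s h
      · rw [D_concat_length]; exact hx1
    · intro s s' hss hs'
      rw [hlen] at hs'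
      rcases Nat.lt_succ_iff_lt_or_eq.1 hs' with h | rfl
      · rw [D_append_lt _ _ h, D_append_lt _ _ (hss.trans h)]; exact hl.2 s s' hss h
      · rw [D_concat_length, D_append_lt _ _ hss]
        exact ⟨hx2 s hss, hx3 s hss⟩
  obtain ⟨f, hf⟩ := run_chain Inv Big h0 hne hstep
  refine ⟨fun r => (n, f r), fun r r' hrr' _ => ?_⟩
  have := (hf (r' + 1)).1.2 r r' hrr' (by simp [hrr'])
  rw [D_range_map _ (by omega), D_range_map _ (by omega)] at this
  exact ⟨this.1, by simpa [Prod.ext_iff] using this.2.ne⟩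

end Red

section Red2

variable {U : Ultrafilter ℕ} {C : ℕ × ℕ → ℕ × ℕ → Bool}

theorem red2 (hU : (U : Filter ℕ) ≤ cofinite)
    (h2 : {n | ¬ ({j | good U C (n, j)} ∈ U)} ∈ U) (m : ℕ) :
    ∃ g : ℕ → ℕ × ℕ, ∀ r r', r < r' → r' < m →
      C (g r) (g r') = true ∧ g r ≠ g r' := by
  set Inv : List (ℕ × ℕ) → Prop := fun l =>
    (∀ s, s < l.length → ¬ good U C (D l s)) ∧
    (∀ s s', s < s' → s' < l.length →
      C (D l s) (D l s') = true ∧ (D l s).1 < (D l s').1) with hInvDef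
  set Big : List (ℕ × ℕ) → Set (ℕ × ℕ) := fun l =>
    {p | p.1 ∈ ({n | ¬ ({j | good U C (n, j)} ∈ U)} ∩
          ({n | ∀ s, s < l.length → ¬ hbl U C (D l s) n} ∩
           {n | ∀ s, s < l.length → (D l s).1 < n})) ∧
         p.2 ∈ ({j | ¬ good U C (p.1, j)} ∩
           {j | ∀ s, s < l.length → C (D l s) (p.1, j) = true})} with hBigDef
  have h0 : Inv [] := by constructor <;> intro s <;> simp
  have hne : ∀ l, Inv l → (Big l).Nonempty := by
    intro l hl
    have hN : ({n | ¬ ({j | good U C (n, j)} ∈ U)} ∩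
        ({n | ∀ s, s < l.length → ¬ hbl U C (D l s) n} ∩
         {n | ∀ s, s < l.length → (D l s).1 < n})) ∈ U := by
      refine Filter.inter_mem h2 (Filter.inter_mem ?_ ?_)
      · exact U_forall_lt _ _ fun s hs => not_good (hl.1 s hs)
      · exact U_forall_lt _ _ fun s hs => U_gt hU _
    obtain ⟨n, hn⟩ := Ultrafilter.nonempty_of_mem hN
    have hJ : ({j | ¬ good U C (n, j)} ∩
        {j | ∀ s, s < l.length → C (D l s) (n, j) = true}) ∈ U := by
      refine Filter.inter_mem (mem_U_of_not_mem hn.1) ?_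
      exact U_forall_lt _ _ fun s hs => not_hbl (hn.2.1 s hs)
    obtain ⟨j, hj⟩ := Ultrafilter.nonempty_of_mem hJ
    exact ⟨(n, j), hn, hj⟩
  have hstep : ∀ l x, Inv l → x ∈ Big l → Inv (l ++ [x]) := by
    intro l x hl hx
    obtain ⟨⟨hx1, hx2, hx3⟩, hx4, hx5⟩ := hx
    have hlen : (l ++ [x]).length = l.length + 1 := by simp
    constructor
    · intro s hs
      rw [hlen] at hs
      rcases Nat.lt_succ_iff_lt_or_eq.1 hs with h | rfl
      · rw [D_append_lt _ _ h]; exact hl.1 s h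
      · rw [D_concat_length]; simpa using hx4
    · intro s s' hss hs'
      rw [hlen] at hs'
      rcases Nat.lt_succ_iff_lt_or_eq.1 hs' with h | rfl
      · rw [D_append_lt _ _ h, D_append_lt _ _ (hss.trans h)]; exact hl.2 s s' hss h
      · rw [D_concat_length, D_append_lt _ _ hss]
        exact ⟨by simpa using hx5 s hss, hx3 s hss⟩
  obtain ⟨f, hf⟩ := run_chain Inv Big h0 hne hstep
  refine ⟨f, fun r r' hrr' _ => ?_⟩
  have := (hf (r' + 1)).1.2 r r' hrr' (by simp [hrr'])
  rw [D_range_map _ (by omega), D_range_map _ (by omega)] at this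
  exact ⟨this.1, fun h => absurd (congrArg Prod.fst h) this.2.ne⟩

theorem red3 (hU : (U : Filter ℕ) ≤ cofinite)
    (h3 : {n | ¬ ({n' | db U C n n'} ∈ U)} ∈ U) (m : ℕ) :
    ∃ g : ℕ → ℕ × ℕ, ∀ r r', r < r' → r' < m →
      C (g r) (g r') = true ∧ g r ≠ g r' := by
  -- Phase 1 : columns
  set Invc : List ℕ → Prop := fun l =>
    (∀ s, s < l.length → ¬ ({n' | db U C (D l s) n'} ∈ U)) ∧
    (∀ s s', s < s' → s' < l.length → ¬ db U C (D l s) (D l s') ∧ D l s < D l s')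
    with hInvcDef
  set Bigc : List ℕ → Set ℕ := fun l =>
    {n | ¬ ({n' | db U C n n'} ∈ U)} ∩ ({n | ∀ s, s < l.length → ¬ db U C (D l s) n} ∩
      {n | ∀ s, s < l.length → D l s < n}) with hBigcDef
  have h0c : Invc [] := by constructor <;> intro s <;> simp
  have hnec : ∀ l, Invc l → (Bigc l).Nonempty := by
    intro l hl
    refine Ultrafilter.nonempty_of_mem (Filter.inter_mem h3 (Filter.inter_mem ?_ ?_))
    · exact U_forall_lt _ _ fun s hs => mem_U_of_not_mem (hl.1 s hs)
    · exact U_forall_lt _ _ fun s hs => U_gt hU _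
  have hstepc : ∀ l x, Invc l → x ∈ Bigc l → Invc (l ++ [x]) := by
    intro l x hl hx
    obtain ⟨hx1, hx2, hx3⟩ := hx
    have hlen : (l ++ [x]).length = l.length + 1 := by simp
    constructor
    · intro s hs
      rw [hlen] at hs
      rcases Nat.lt_succ_iff_lt_or_eq.1 hs with h | rfl
      · rw [D_append_lt _ _ h]; exact hl.1 s h
      · rw [D_concat_length]; exact hx1
    · intro s s' hss hs'
      rw [hlen] at hs'
      rcases Nat.lt_succ_iff_lt_or_eq.1 hs' with h | rfl
      · rw [D_append_lt _ _ h, D_append_lt _ _ (hss.trans h)]; exact hl.2 s s' hss h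
      · rw [D_concat_length, D_append_lt _ _ hss]
        exact ⟨hx2 s hss, hx3 s hss⟩
  obtain ⟨fc, hfc⟩ := run_chain Invc Bigc h0c hnec hstepc
  have Fc : ∀ r r', r < r' → ¬ db U C (fc r) (fc r') ∧ fc r < fc r' := by
    intro r r' hrr'
    have := (hfc (r' + 1)).1.2 r r' hrr' (by simp [hrr'])
    rwa [D_range_map _ (by omega), D_range_map _ (by omega)] at this
  -- Phase 2 : points
  set Invp : List ℕ → Prop := fun l =>
    (∀ s, s < l.length → ∀ r'', s < r'' → r'' < m →
        ¬ hbl U C (fc s, D l s) (fc r'')) ∧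
    (∀ s s', s < s' → s' < l.length → s' < m →
        C (fc s, D l s) (fc s', D l s') = true) with hInvpDef
  set Bigp : List ℕ → Set ℕ := fun l =>
    if l.length < m then
      {k | ∀ r'', r'' < m → l.length < r'' → ¬ hbl U C (fc l.length, k) (fc r'')} ∩
      {k | ∀ s, s < l.length → C (fc s, D l s) (fc l.length, k) = true}
    else Set.univ with hBigpDef
  have h0p : Invp [] := by constructor <;> intro s <;> simp
  have hnep : ∀ l, Invp l → (Bigp l).Nonempty := by
    intro l hl
    simp only [hBigpDef]
    split
    · refine Ultrafilter.nonempty_of_mem (f := U) (Filter.inter_mem ?_ ?_)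
      · refine U_forall_lt _ _ fun r'' hr'' => U_imp fun hlt => ?_
        exact not_db (Fc _ _ hlt).1
      · refine U_forall_lt _ _ fun s hs => ?_
        exact not_hbl (hl.1 s hs l.length hs (by assumption))
    · exact ⟨0, trivial⟩
  have hstepp : ∀ l x, Invp l → x ∈ Bigp l → Invp (l ++ [x]) := by
    intro l x hl hx
    have hlen : (l ++ [x]).length = l.length + 1 := by simp
    by_cases hm : l.length < m
    · rw [hBigpDef] at hx
      simp only [if_pos hm] at hx
      obtain ⟨hx1, hx2⟩ := hx
      constructor
      · intro s hs r'' hsr hr''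
        rw [hlen] at hs
        rcases Nat.lt_succ_iff_lt_or_eq.1 hs with h | rfl
        · rw [D_append_lt _ _ h]; exact hl.1 s h r'' hsr hr''
        · rw [D_concat_length]; exact hx1 r'' hr'' hsr
      · intro s s' hss hs' hs'm
        rw [hlen] at hs'
        rcases Nat.lt_succ_iff_lt_or_eq.1 hs' with h | rfl
        · rw [D_append_lt _ _ h, D_append_lt _ _ (hss.trans h)]
          exact hl.2 s s' hss h hs'm
        · rw [D_concat_length, D_append_lt _ _ hss]
          exact hx2 s hss
    · constructor
      · intro s hs r'' hsr hr''
        rw [hlen] at hs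
        rcases Nat.lt_succ_iff_lt_or_eq.1 hs with h | rfl
        · rw [D_append_lt _ _ h]; exact hl.1 s h r'' hsr hr''
        · omega
      · intro s s' hss hs' hs'm
        rw [hlen] at hs'
        rcases Nat.lt_succ_iff_lt_or_eq.1 hs' with h | rfl
        · rw [D_append_lt _ _ h, D_append_lt _ _ (hss.trans h)]
          exact hl.2 s s' hss h hs'm
        · omega
  obtain ⟨fp, hfp⟩ := run_chain Invp Bigp h0p hnep hstepp
  refine ⟨fun r => (fc r, fp r), fun r r' hrr' hr'm => ?_⟩
  have := (hfp (r' + 1)).1.2 r r' hrr' (by simp [hrr']) hr'm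
  rw [D_range_map _ (by omega), D_range_map _ (by omega)] at this
  exact ⟨this, fun h => absurd (congrArg Prod.fst h) (Fc r r' hrr').2.ne⟩

theorem red4 (hU : (U : Filter ℕ) ≤ cofinite) (hsym : ∀ p q, C p q = C q p)
    (h4 : {n | ¬ ({n' | db U C n' n} ∈ U)} ∈ U) (m : ℕ) :
    ∃ g : ℕ → ℕ × ℕ, ∀ r r', r < r' → r' < m →
      C (g r) (g r') = true ∧ g r ≠ g r' := by
  -- Phase 1 : columns
  set Invc : List ℕ → Prop := fun l =>
    (∀ s, s < l.length → ¬ ({n' | db U C n' (D l s)} ∈ U)) ∧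
    (∀ s s', s < s' → s' < l.length → ¬ db U C (D l s') (D l s) ∧ D l s < D l s')
    with hInvcDef
  set Bigc : List ℕ → Set ℕ := fun l =>
    {n | ¬ ({n' | db U C n' n} ∈ U)} ∩ ({n | ∀ s, s < l.length → ¬ db U C n (D l s)} ∩
      {n | ∀ s, s < l.length → D l s < n}) with hBigcDef
  have h0c : Invc [] := by constructor <;> intro s <;> simp
  have hnec : ∀ l, Invc l → (Bigc l).Nonempty := by
    intro l hl
    refine Ultrafilter.nonempty_of_mem (Filter.inter_mem h4 (Filter.inter_mem ?_ ?_))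
    · exact U_forall_lt _ _ fun s hs => mem_U_of_not_mem (hl.1 s hs)
    · exact U_forall_lt _ _ fun s hs => U_gt hU _
  have hstepc : ∀ l x, Invc l → x ∈ Bigc l → Invc (l ++ [x]) := by
    intro l x hl hx
    obtain ⟨hx1, hx2, hx3⟩ := hx
    have hlen : (l ++ [x]).length = l.length + 1 := by simp
    constructor
    · intro s hs
      rw [hlen] at hs
      rcases Nat.lt_succ_iff_lt_or_eq.1 hs with h | rfl
      · rw [D_append_lt _ _ h]; exact hl.1 s h
      · rw [D_concat_length]; exact hx1
    · intro s s' hss hs'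
      rw [hlen] at hs'
      rcases Nat.lt_succ_iff_lt_or_eq.1 hs' with h | rfl
      · rw [D_append_lt _ _ h, D_append_lt _ _ (hss.trans h)]; exact hl.2 s s' hss h
      · rw [D_concat_length, D_append_lt _ _ hss]
        exact ⟨hx2 s hss, hx3 s hss⟩
  obtain ⟨fc, hfc⟩ := run_chain Invc Bigc h0c hnec hstepc
  have Fc : ∀ r r', r < r' → ¬ db U C (fc r') (fc r) ∧ fc r < fc r' := by
    intro r r' hrr'
    have := (hfc (r' + 1)).1.2 r r' hrr' (by simp [hrr'])
    rwa [D_range_map _ (by omega), D_range_map _ (by omega)] at this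
  -- Phase 2 : points, chosen downwards.  At chain step `u < m` we pick the point
  -- of column `fc (m-1-u)`.
  set Invp : List ℕ → Prop := fun l =>
    (∀ u, u < l.length → u < m → ∀ r', r' < m - 1 - u →
        ¬ hbl U C (fc (m - 1 - u), D l u) (fc r')) ∧
    (∀ u u', u < u' → u' < l.length → u' < m →
        C (fc (m - 1 - u), D l u) (fc (m - 1 - u'), D l u') = true) with hInvpDef
  set Bigp : List ℕ → Set ℕ := fun l =>
    if l.length < m then
      {k | ∀ r', r' < m - 1 - l.length → ¬ hbl U C (fc (m - 1 - l.length), k) (fc r')} ∩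
      {k | ∀ u', u' < l.length → C (fc (m - 1 - u'), D l u') (fc (m - 1 - l.length), k) = true}
    else Set.univ with hBigpDef
  have h0p : Invp [] := by constructor <;> intro s <;> simp
  have hnep : ∀ l, Invp l → (Bigp l).Nonempty := by
    intro l hl
    simp only [hBigpDef]
    split
    · refine Ultrafilter.nonempty_of_mem (f := U) (Filter.inter_mem ?_ ?_)
      · refine U_forall_lt _ _ fun r' hr' => ?_
        exact not_db (Fc _ _ hr').1
      · refine U_forall_lt _ _ fun u' hu' => ?_
        refine not_hbl (hl.1 u' hu' (by omega) (m - 1 - l.length) (by omega))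
    · exact ⟨0, trivial⟩
  have hstepp : ∀ l x, Invp l → x ∈ Bigp l → Invp (l ++ [x]) := by
    intro l x hl hx
    have hlen : (l ++ [x]).length = l.length + 1 := by simp
    by_cases hm : l.length < m
    · rw [hBigpDef] at hx
      simp only [if_pos hm] at hx
      obtain ⟨hx1, hx2⟩ := hx
      constructor
      · intro u hu hum r' hr'
        rw [hlen] at hu
        rcases Nat.lt_succ_iff_lt_or_eq.1 hu with h | rfl
        · rw [D_append_lt _ _ h]; exact hl.1 u h hum r' hr'
        · rw [D_concat_length]; exact hx1 r' hr'
      · intro u u' huu hu' hu'm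
        rw [hlen] at hu'
        rcases Nat.lt_succ_iff_lt_or_eq.1 hu' with h | rfl
        · rw [D_append_lt _ _ h, D_append_lt _ _ (huu.trans h)]
          exact hl.2 u u' huu h hu'm
        · rw [D_concat_length, D_append_lt _ _ huu]
          exact hx2 u huu
    · constructor
      · intro u hu hum r' hr'
        rw [hlen] at hu
        rcases Nat.lt_succ_iff_lt_or_eq.1 hu with h | rfl
        · rw [D_append_lt _ _ h]; exact hl.1 u h hum r' hr'
        · omega
      · intro u u' huu hu' hu'm
        rw [hlen] at hu'
        rcases Nat.lt_succ_iff_lt_or_eq.1 hu' with h | rfl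
        · rw [D_append_lt _ _ h, D_append_lt _ _ (huu.trans h)]
          exact hl.2 u u' huu h hu'm
        · omega
  obtain ⟨fp, hfp⟩ := run_chain Invp Bigp h0p hnep hstepp
  refine ⟨fun r => (fc r, fp (m - 1 - r)), fun r r' hrr' hr'm => ?_⟩
  have key := (hfp (m - 1 - r + 1)).1.2 (m - 1 - r') (m - 1 - r) (by omega)
    (by simp) (by omega)
  rw [D_range_map _ (by omega), D_range_map _ (by omega)] at key
  have e1 : m - 1 - (m - 1 - r') = r' := by omega
  have e2 : m - 1 - (m - 1 - r) = r := by omega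
  rw [e1, e2] at key
  refine ⟨by rw [hsym]; exact key, fun h => absurd (congrArg Prod.fst h) (Fc r r' hrr').2.ne⟩

end Red2

section Blue

variable {U : Ultrafilter ℕ} {C : ℕ × ℕ → ℕ × ℕ → Bool}

theorem pair_zero_le (i j : ℕ) : Nat.pair i 0 ≤ Nat.pair i j := by
  rcases Nat.eq_zero_or_pos j with h | h
  · simp [h]
  · exact (Nat.pair_lt_pair_right i h).le

theorem pair_zero_lt_pair_zero {i i' : ℕ} (h : i < i') : Nat.pair i 0 < Nat.pair i' 0 :=
  Nat.pair_lt_pair_left 0 h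

theorem blue_main (hU : (U : Filter ℕ) ≤ cofinite) (hsym : ∀ p q, C p q = C q p)
    (hA : {n | okc U C n} ∈ U) :
    ∃ φ : ℕ × ℕ → ℕ × ℕ,
      (∀ a b : ℕ × ℕ, a.1 < b.1 → (φ a).1 < (φ b).1) ∧
      (∀ a b : ℕ × ℕ, a.1 = b.1 → a.2 < b.2 → (φ a).1 = (φ b).1 ∧ (φ a).2 < (φ b).2) ∧
      (∀ a b : ℕ × ℕ, a ≠ b → C (φ a) (φ b) = false) := by
  classical
  set Inv : List (ℕ × ℕ) → Prop := fun l =>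
    (∀ s, s < l.length → Nat.pair (Nat.unpair s).1 0 < l.length →
        (D l s).1 = (D l (Nat.pair (Nat.unpair s).1 0)).1) ∧
    (∀ s, s < l.length → okc U C (D l s).1) ∧
    (∀ s, s < l.length → good U C (D l s)) ∧
    (∀ i i', Nat.pair i 0 < l.length → Nat.pair i' 0 < l.length → i < i' →
        (D l (Nat.pair i 0)).1 < (D l (Nat.pair i' 0)).1) ∧
    (∀ i i', Nat.pair i 0 < l.length → Nat.pair i' 0 < l.length →
        db U C (D l (Nat.pair i 0)).1 (D l (Nat.pair i' 0)).1) ∧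
    (∀ s i'', s < l.length → Nat.pair i'' 0 < l.length →
        hbl U C (D l s) (D l (Nat.pair i'' 0)).1) ∧
    (∀ s s', s < s' → s' < l.length →
        C (D l s) (D l s') = false ∧
        ((Nat.unpair s).1 = (Nat.unpair s').1 → (D l s).2 < (D l s').2)) with hInvDef
  set CS : List (ℕ × ℕ) → Set ℕ := fun l =>
    {n | okc U C n} ∩ ({n | ∀ s, s < l.length → hbl U C (D l s) n} ∩
      ({n | ∀ i', Nat.pair i' 0 < l.length →
          db U C (D l (Nat.pair i' 0)).1 n ∧ db U C n (D l (Nat.pair i' 0)).1} ∩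
       {n | ∀ i', Nat.pair i' 0 < l.length → (D l (Nat.pair i' 0)).1 < n})) with hCSDef
  set PS : List (ℕ × ℕ) → ℕ → Set ℕ := fun l n =>
    {k | good U C (n, k)} ∩ ({k | hbl U C (n, k) n} ∩
      ({k | ∀ i', Nat.pair i' 0 < l.length → hbl U C (n, k) (D l (Nat.pair i' 0)).1} ∩
       ({k | ∀ s, s < l.length → C (D l s) (n, k) = false} ∩
        {k | ∀ s, s < l.length → (D l s).2 < k}))) with hPSDef
  set Big : List (ℕ × ℕ) → Set (ℕ × ℕ) := fun l =>
    if (Nat.unpair l.length).2 = 0 then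
      {p | p.1 ∈ CS l ∧ p.2 ∈ PS l p.1}
    else
      {p | p.1 = (D l (Nat.pair (Nat.unpair l.length).1 0)).1 ∧ p.2 ∈ PS l p.1}
    with hBigDef
  have h0 : Inv [] := by
    refine ⟨?_, ?_, ?_, ?_, ?_, ?_, ?_⟩ <;> intro s <;> simp
  -- auxiliary facts about columns
  have hCS_mem : ∀ l, Inv l → CS l ∈ U := by
    intro l hl
    obtain ⟨ha, hb, hc, hCI, hCD, hQh, hPK⟩ := hl
    refine Filter.inter_mem hA (Filter.inter_mem ?_ (Filter.inter_mem ?_ ?_))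
    · exact U_forall_lt _ _ fun s hs => hc s hs
    · refine Filter.mem_of_superset
        (U_forall_lt l.length (fun i' n => Nat.pair i' 0 < l.length →
          (db U C (D l (Nat.pair i' 0)).1 n ∧ db U C n (D l (Nat.pair i' 0)).1)) ?_)
        (fun n hn i' hpi => hn i' (lt_of_le_of_lt (Nat.left_le_pair i' 0) hpi) hpi)
      intro i' _
      refine U_imp fun h => ?_
      have hok := hb _ h
      exact Filter.inter_mem hok.2.2.1 hok.2.2.2
    · refine Filter.mem_of_superset
        (U_forall_lt l.length (fun i' n => Nat.pair i' 0 < l.length →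
          (D l (Nat.pair i' 0)).1 < n) ?_)
        (fun n hn i' hpi => hn i' (lt_of_le_of_lt (Nat.left_le_pair i' 0) hpi) hpi)
      intro i' _
      exact U_imp fun h => U_gt hU _
  have hPS_mem_of_CS : ∀ l n, Inv l → n ∈ CS l → PS l n ∈ U := by
    intro l n hl hn
    obtain ⟨hn1, hn2, hn3, hn4⟩ := hn
    refine Filter.inter_mem hn1.2.1 (Filter.inter_mem hn1.1
      (Filter.inter_mem ?_ (Filter.inter_mem ?_ ?_)))
    · refine Filter.mem_of_superset
        (U_forall_lt l.length (fun i' k => Nat.pair i' 0 < l.length →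
          hbl U C (n, k) (D l (Nat.pair i' 0)).1) ?_)
        (fun k hk i' hpi => hk i' (lt_of_le_of_lt (Nat.left_le_pair i' 0) hpi) hpi)
      intro i' _
      exact U_imp fun h => (hn3 i' h).2
    · exact U_forall_lt _ _ fun s hs => hn2 s hs
    · exact U_forall_lt _ _ fun s hs => U_gt hU _
  have hPS_mem_old : ∀ l i, Inv l → (h : Nat.pair i 0 < l.length) →
      PS l ((D l (Nat.pair i 0)).1) ∈ U := by
    intro l i hl h
    obtain ⟨ha, hb, hc, hCI, hCD, hQh, hPK⟩ := hl
    have hok := hb _ h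
    refine Filter.inter_mem hok.2.1 (Filter.inter_mem hok.1
      (Filter.inter_mem ?_ (Filter.inter_mem ?_ ?_)))
    · refine Filter.mem_of_superset
        (U_forall_lt l.length (fun i' k => Nat.pair i' 0 < l.length →
          hbl U C ((D l (Nat.pair i 0)).1, k) (D l (Nat.pair i' 0)).1) ?_)
        (fun k hk i' hpi => hk i' (lt_of_le_of_lt (Nat.left_le_pair i' 0) hpi) hpi)
      intro i' _
      exact U_imp fun h' => hCD i i' h h'
    · exact U_forall_lt _ _ fun s hs => hQh s i hs h
    · exact U_forall_lt _ _ fun s hs => U_gt hU _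
  have hne : ∀ l, Inv l → (Big l).Nonempty := by
    intro l hl
    rw [hBigDef]
    by_cases hj : (Nat.unpair l.length).2 = 0
    · simp only [if_pos hj]
      obtain ⟨n, hn⟩ := Ultrafilter.nonempty_of_mem (hCS_mem l hl)
      obtain ⟨k, hk⟩ := Ultrafilter.nonempty_of_mem (hPS_mem_of_CS l n hl hn)
      exact ⟨(n, k), hn, hk⟩
    · simp only [if_neg hj]
      have hlt : Nat.pair (Nat.unpair l.length).1 0 < l.length := by
        have h1 : Nat.pair (Nat.unpair l.length).1 0 ≤ l.length := by
          conv_rhs => rw [← Nat.pair_unpair l.length]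
          exact pair_zero_le _ _
        rcases Nat.lt_or_ge (Nat.pair (Nat.unpair l.length).1 0) l.length with h | h
        · exact h
        · exfalso
          have : Nat.pair (Nat.unpair l.length).1 0 = l.length := le_antisymm h1 h
          have := congrArg Nat.unpair this
          rw [Nat.unpair_pair] at this
          exact hj (by rw [← this])
      obtain ⟨k, hk⟩ := Ultrafilter.nonempty_of_mem (hPS_mem_old l _ hl hlt)
      exact ⟨((D l (Nat.pair (Nat.unpair l.length).1 0)).1, k), rfl, hk⟩
  have hstep : ∀ l x, Inv l → x ∈ Big l → Inv (l ++ [x]) := by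
    intro l x hl hx
    obtain ⟨ha, hb, hc, hCI, hCD, hQh, hPK⟩ := hl
    have hlen : (l ++ [x]).length = l.length + 1 := by simp
    have Dlt : ∀ {s : ℕ}, s < l.length → D (l ++ [x]) s = D l s :=
      fun {s} h => D_append_lt _ _ h
    have Dt : D (l ++ [x]) l.length = x := D_concat_length l x
    rw [hBigDef] at hx
    by_cases hj : (Nat.unpair l.length).2 = 0
    · simp only [if_pos hj] at hx
      obtain ⟨hxCS, hxPS⟩ := hx
      have hpt : Nat.pair (Nat.unpair l.length).1 0 = l.length := by
        conv_rhs => rw [← Nat.pair_unpair l.length]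
        rw [hj]
      -- no active column index beyond (unpair l.length).1
      have hcol_le : ∀ i'', Nat.pair i'' 0 < l.length + 1 →
          (Nat.pair i'' 0 < l.length ∧ i'' < (Nat.unpair l.length).1) ∨
          (Nat.pair i'' 0 = l.length ∧ i'' = (Nat.unpair l.length).1) := by
        intro i'' h
        rcases Nat.lt_succ_iff_lt_or_eq.1 h with h | h
        · refine Or.inl ⟨h, ?_⟩
          by_contra hcon
          push_neg at hcon
          rcases Nat.lt_or_ge (Nat.unpair l.length).1 i'' with hlt | hge
          · have := pair_zero_lt_pair_zero hlt
            rw [hpt] at this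
            omega
          · have : i'' = (Nat.unpair l.length).1 := le_antisymm hge hcon
            rw [this, hpt] at h
            omega
        · right
          refine ⟨h, ?_⟩
          have h2 := congrArg Nat.unpair h
          rw [Nat.unpair_pair] at h2
          exact congrArg Prod.fst h2
      obtain ⟨hxCS1, hxCS2, hxCS3, hxCS4⟩ := hxCS
      obtain ⟨hxPS1, hxPS2, hxPS3, hxPS4, hxPS5⟩ := hxPS
      refine ⟨?_, ?_, ?_, ?_, ?_, ?_, ?_⟩
      · -- (a)
        intro s hs hguard
        rw [hlen] at hs hguard
        rcases Nat.lt_succ_iff_lt_or_eq.1 hs with h | rfl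
        · have hg2 : Nat.pair (Nat.unpair s).1 0 < l.length := by
            have := pair_zero_le (Nat.unpair s).1 (Nat.unpair s).2
            rw [Nat.pair_unpair] at this
            omega
          rw [Dlt h, Dlt hg2]
          exact ha s h hg2
        · rw [hpt, Dt]
      · -- (b) okc
        intro s hs
        rw [hlen] at hs
        rcases Nat.lt_succ_iff_lt_or_eq.1 hs with h | rfl
        · rw [Dlt h]; exact hb s h
        · rw [Dt]; exact hxCS1
      · -- (c) good
        intro s hs
        rw [hlen] at hs
        rcases Nat.lt_succ_iff_lt_or_eq.1 hs with h | rfl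
        · rw [Dlt h]; exact hc s h
        · rw [Dt]
          have := hxPS1
          simpa using this
      · -- (CI)
        intro i i' hi hi' hii
        rw [hlen] at hi hi'
        rcases hcol_le i hi with ⟨h1, h2⟩ | ⟨h1, h2⟩ <;>
          rcases hcol_le i' hi' with ⟨h1', h2'⟩ | ⟨h1', h2'⟩
        · rw [Dlt h1, Dlt h1']; exact hCI i i' h1 h1' hii
        · rw [Dlt h1, h1', Dt]; exact hxCS4 i h1
        · omega
        · omega
      · -- (CD)
        intro i i' hi hi'
        rw [hlen] at hi hi'
        rcases hcol_le i hi with ⟨h1, h2⟩ | ⟨h1, h2⟩ <;>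
          rcases hcol_le i' hi' with ⟨h1', h2'⟩ | ⟨h1', h2'⟩
        · rw [Dlt h1, Dlt h1']; exact hCD i i' h1 h1'
        · rw [Dlt h1, h1', Dt]; exact (hxCS3 i h1).1
        · rw [h1, Dt, Dlt h1']; exact (hxCS3 i' h1').2
        · rw [h1, h1', Dt]; exact hxCS1.1
      · -- (Qh)
        intro s i'' hs hi''
        rw [hlen] at hs hi''
        rcases Nat.lt_succ_iff_lt_or_eq.1 hs with h | rfl <;>
          rcases hcol_le i'' hi'' with ⟨h1, h2⟩ | ⟨h1, h2⟩
        · rw [Dlt h, Dlt h1]; exact hQh s i'' h h1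
        · rw [Dlt h, h1, Dt]; exact hxCS2 s h
        · rw [Dt, Dlt h1]
          have := hxPS3 i'' h1
          simpa using this
        · rw [Dt, h1, Dt]
          have := hxPS2
          simpa using this
      · -- (PB/KM)
        intro s s' hss' hs'
        rw [hlen] at hs'
        rcases Nat.lt_succ_iff_lt_or_eq.1 hs' with h | rfl
        · rw [Dlt h, Dlt (hss'.trans h)]
          exact hPK s s' hss' h
        · rw [Dt, Dlt hss']
          refine ⟨?_, fun _ => ?_⟩
          · have := hxPS4 s hss'
            simpa using this
          · exact hxPS5 s hss'
    · -- j ≠ 0 case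
      simp only [if_neg hj] at hx
      obtain ⟨hx1, hxPS⟩ := hx
      have hno_new : ∀ i'', Nat.pair i'' 0 ≠ l.length := by
        intro i'' hcon
        have := congrArg Nat.unpair hcon
        rw [Nat.unpair_pair] at this
        exact hj (by rw [← this])
      have hlt : Nat.pair (Nat.unpair l.length).1 0 < l.length := by
        have h1 : Nat.pair (Nat.unpair l.length).1 0 ≤ l.length := by
          conv_rhs => rw [← Nat.pair_unpair l.length]
          exact pair_zero_le _ _
        rcases lt_or_eq_of_le h1 with h | h
        · exact h
        · exact absurd h (hno_new _)
      obtain ⟨hxPS1, hxPS2, hxPS3, hxPS4, hxPS5⟩ := hxPS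
      refine ⟨?_, ?_, ?_, ?_, ?_, ?_, ?_⟩
      · intro s hs hguard
        rw [hlen] at hs hguard
        rcases Nat.lt_succ_iff_lt_or_eq.1 hs with h | rfl
        · have hg2 : Nat.pair (Nat.unpair s).1 0 < l.length := by
            have := pair_zero_le (Nat.unpair s).1 (Nat.unpair s).2
            rw [Nat.pair_unpair] at this
            omega
          rw [Dlt h, Dlt hg2]
          exact ha s h hg2
        · rw [Dt, Dlt hlt]
          exact hx1
      · intro s hs
        rw [hlen] at hs
        rcases Nat.lt_succ_iff_lt_or_eq.1 hs with h | rfl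
        · rw [Dlt h]; exact hb s h
        · rw [Dt, hx1]; exact hb _ hlt
      · intro s hs
        rw [hlen] at hs
        rcases Nat.lt_succ_iff_lt_or_eq.1 hs with h | rfl
        · rw [Dlt h]; exact hc s h
        · rw [Dt]
          have := hxPS1
          have hx' : x = (x.1, x.2) := rfl
          rw [hx']
          simpa using this
      · intro i i' hi hi' hii
        rw [hlen] at hi hi'
        have hi2 : Nat.pair i 0 < l.length := by
          rcases Nat.lt_succ_iff_lt_or_eq.1 hi with h | h
          · exact h
          · exact absurd h (hno_new i)
        have hi'2 : Nat.pair i' 0 < l.length := by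
          rcases Nat.lt_succ_iff_lt_or_eq.1 hi' with h | h
          · exact h
          · exact absurd h (hno_new i')
        rw [Dlt hi2, Dlt hi'2]
        exact hCI i i' hi2 hi'2 hii
      · intro i i' hi hi'
        rw [hlen] at hi hi'
        have hi2 : Nat.pair i 0 < l.length := by
          rcases Nat.lt_succ_iff_lt_or_eq.1 hi with h | h
          · exact h
          · exact absurd h (hno_new i)
        have hi'2 : Nat.pair i' 0 < l.length := by
          rcases Nat.lt_succ_iff_lt_or_eq.1 hi' with h | h
          · exact h
          · exact absurd h (hno_new i')
        rw [Dlt hi2, Dlt hi'2]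
        exact hCD i i' hi2 hi'2
      · intro s i'' hs hi''
        rw [hlen] at hs hi''
        have hi2 : Nat.pair i'' 0 < l.length := by
          rcases Nat.lt_succ_iff_lt_or_eq.1 hi'' with h | h
          · exact h
          · exact absurd h (hno_new i'')
        rcases Nat.lt_succ_iff_lt_or_eq.1 hs with h | rfl
        · rw [Dlt h, Dlt hi2]; exact hQh s i'' h hi2
        · rw [Dt, Dlt hi2]
          have := hxPS3 i'' hi2
          have hx' : x = (x.1, x.2) := rfl
          rw [hx']
          simpa using this
      · intro s s' hss' hs'
        rw [hlen] at hs'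
        rcases Nat.lt_succ_iff_lt_or_eq.1 hs' with h | rfl
        · rw [Dlt h, Dlt (hss'.trans h)]
          exact hPK s s' hss' h
        · rw [Dt, Dlt hss']
          refine ⟨?_, fun _ => ?_⟩
          · have := hxPS4 s hss'
            have hx' : x = (x.1, x.2) := rfl
            rw [hx']
            simpa using this
          · exact hxPS5 s hss'
  obtain ⟨f, hf⟩ := run_chain Inv Big h0 hne hstep
  have master : ∀ t, Inv ((List.range t).map f) := fun t => (hf t).1
  have hlen' : ∀ t, ((List.range t).map f).length = t := by simp
  -- extract the clauses as statements about f
  have Fa : ∀ a : ℕ × ℕ, (f (Nat.pair a.1 a.2)).1 = (f (Nat.pair a.1 0)).1 := by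
    intro a
    set t := Nat.pair a.1 a.2 + 1 with ht
    have h1 : Nat.pair a.1 a.2 < t := by omega
    have h2 : Nat.pair a.1 0 < t := lt_of_le_of_lt (pair_zero_le a.1 a.2) (by omega)
    have := (master t).1 (Nat.pair a.1 a.2) (by rw [hlen']; exact h1)
      (by rw [hlen', Nat.unpair_pair]; exact h2)
    rw [D_range_map _ h1] at this
    rw [Nat.unpair_pair] at this
    rw [D_range_map _ h2] at this
    exact this
  have FCI : ∀ i i', i < i' → (f (Nat.pair i 0)).1 < (f (Nat.pair i' 0)).1 := by
    intro i i' hii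
    set t := Nat.pair i' 0 + 1 with ht
    have h2 : Nat.pair i' 0 < t := by omega
    have h1 : Nat.pair i 0 < t := lt_of_le_of_lt (pair_zero_lt_pair_zero hii).le (by omega)
    have := (master t).2.2.2.1 i i' (by rw [hlen']; exact h1) (by rw [hlen']; exact h2) hii
    rwa [D_range_map _ h1, D_range_map _ h2] at this
  have FPK : ∀ s s', s < s' →
      C (f s) (f s') = false ∧
      ((Nat.unpair s).1 = (Nat.unpair s').1 → (f s).2 < (f s').2) := by
    intro s s' hss'
    have h2 : s' < s' + 1 := by omega
    have h1 : s < s' + 1 := by omega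
    have := (master (s' + 1)).2.2.2.2.2.2 s s' hss' (by rw [hlen']; exact h2)
    rwa [D_range_map _ h1, D_range_map _ h2] at this
  refine ⟨fun a => f (Nat.pair a.1 a.2), ?_, ?_, ?_⟩
  · intro a b hab
    rw [Fa a, Fa b]
    exact FCI _ _ hab
  · intro a b h1 h2
    have hss : Nat.pair a.1 a.2 < Nat.pair b.1 b.2 := by
      rw [h1]
      exact Nat.pair_lt_pair_right b.1 h2
    constructor
    · rw [Fa a, Fa b, h1]
    · refine (FPK _ _ hss).2 ?_
      rw [Nat.unpair_pair, Nat.unpair_pair, h1]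
  · intro a b hab
    have hne' : Nat.pair a.1 a.2 ≠ Nat.pair b.1 b.2 := by
      intro hcon
      have := congrArg Nat.unpair hcon
      rw [Nat.unpair_pair, Nat.unpair_pair] at this
      exact hab (Prod.ext (congrArg Prod.fst this) (congrArg Prod.snd this))
    rcases Nat.lt_or_ge (Nat.pair a.1 a.2) (Nat.pair b.1 b.2) with h | h
    · exact (FPK _ _ h).1
    · have h' : Nat.pair b.1 b.2 < Nat.pair a.1 a.2 := lt_of_le_of_ne h (Ne.symm hne')
      rw [hsym]
      exact (FPK _ _ h').1

end Blue

universe u v in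
theorem no_blue {γ : Ordinal.{u}} (hγ : γ < Ordinal.omega0 * Ordinal.omega0)
    {B : Set Ordinal.{u}} (hBsub : B ⊆ Set.Iio γ)
    (e : ↥B ≃o ↥(Set.Iio (Ordinal.omega0.{v} * Ordinal.omega0.{v}))) : False := by
  have key : ∀ x' : Ordinal.{v}, ∀ h : x' < Ordinal.omega0 * Ordinal.omega0,
      Ordinal.lift.{u} x' ≤ Ordinal.lift.{v} ((e.symm ⟨x', h⟩ : ↥B) : Ordinal) := by
    intro x'
    induction x' using Ordinal.induction with
    | _ x' ih =>
      intro h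
      by_contra hcon
      push_neg at hcon
      obtain ⟨k, hk⟩ := Ordinal.mem_range_lift_of_le hcon.le
      have hkx : k < x' := by
        rw [← Ordinal.lift_lt.{u}, hk]
        exact hcon
      have hkW : k < Ordinal.omega0 * Ordinal.omega0 := hkx.trans h
      have h1 := ih k hkx hkW
      have h2 : ((e.symm ⟨k, hkW⟩ : ↥B) : Ordinal) < ((e.symm ⟨x', h⟩ : ↥B) : Ordinal) :=
        Subtype.coe_lt_coe.2 (e.symm.lt_iff_lt.2 (Subtype.mk_lt_mk.2 hkx))
      have h3 := Ordinal.lift_lt.{v}.2 h2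
      rw [← hk] at h3
      exact absurd (h1.trans_lt h3) (lt_irrefl _)
  have hγlift : Ordinal.lift.{v} γ <
      Ordinal.lift.{u} (Ordinal.omega0.{v} * Ordinal.omega0.{v}) := by
    rw [Ordinal.lift_mul, Ordinal.lift_omega0]
    have h0 : Ordinal.lift.{v} γ <
        Ordinal.lift.{v} (Ordinal.omega0.{u} * Ordinal.omega0.{u}) :=
      Ordinal.lift_lt.2 hγ
    rwa [Ordinal.lift_mul, Ordinal.lift_omega0] at h0
  obtain ⟨x', hx'⟩ := Ordinal.mem_range_lift_of_le hγlift.le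
  have hx'W : x' < Ordinal.omega0 * Ordinal.omega0 := by
    rw [← Ordinal.lift_lt.{u}, hx']
    exact hγlift
  have h1 := key x' hx'W
  rw [hx'] at h1
  have h2 : ((e.symm ⟨x', hx'W⟩ : ↥B) : Ordinal) < γ := hBsub (e.symm ⟨x', hx'W⟩).2
  have h3 := Ordinal.lift_lt.{v}.2 h2
  exact absurd (h1.trans_lt h3) (lt_irrefl _)

theorem extract_red (c : Sym2 (ℕ ×ₗ ℕ) → Bool) (m : ℕ) (g : ℕ → ℕ × ℕ)
    (hg : ∀ r r', r < r' → r' < m →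
      c s(toLex (g r), toLex (g r')) = true ∧ g r ≠ g r') :
    ∃ R : Finset (ℕ ×ₗ ℕ), R.card = m ∧
      ∀ x ∈ R, ∀ y ∈ R, x ≠ y → c s(x, y) = true := by
  classical
  refine ⟨(Finset.range m).image (fun r => toLex (g r)), ?_, ?_⟩
  · rw [Finset.card_image_of_injOn, Finset.card_range]
    intro r hr r' hr' hrr'
    simp only [Finset.coe_range, Set.mem_Iio] at hr hr'
    by_contra hne
    have hgg : g r = g r' := hrr'
    rcases Nat.lt_or_ge r r' with h | h
    · exact (hg r r' h hr').2 hgg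
    · exact (hg r' r (by omega) hr).2 hgg.symm
  · intro x hx y hy hxy
    simp only [Finset.mem_image, Finset.mem_range] at hx hy
    obtain ⟨r, hr, rfl⟩ := hx
    obtain ⟨r', hr', rfl⟩ := hy
    have hne : r ≠ r' := fun h => hxy (by rw [h])
    rcases Nat.lt_or_ge r r' with h | h
    · exact (hg r r' h hr').1
    · rw [Sym2.eq_swap]
      exact (hg r' r (by omega) hr).1

end FOmSq

/-- f(m, ω²) = ω² for every integer m > 0. First part: every red/blue coloring
of the 2-element subsets of ℕ ×ₗ ℕ (a well-order of type ω², ordered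
lexicographically) contains a red (`true`) subset of size m or a blue (`false`)
subset of order type ω². Second part (minimality, for m ≥ 2): for every ordinal
γ < ω² there is a coloring of the 2-element subsets of the ordinals below γ
with neither a red subset of size m nor a blue subset of order type ω². -/
theorem f_m_omega_sq_eq_omega_sq (m : ℕ) (hm : 0 < m) :
    (∀ c : Sym2 (ℕ ×ₗ ℕ) → Bool,
      (∃ R : Finset (ℕ ×ₗ ℕ), R.card = m ∧
        ∀ x ∈ R, ∀ y ∈ R, x ≠ y → c s(x, y) = true) ∨
      (∃ B : Set (ℕ ×ₗ ℕ),
        (∀ x ∈ B, ∀ y ∈ B, x ≠ y → c s(x, y) = false) ∧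
        Nonempty (↥B ≃o (ℕ ×ₗ ℕ)))) ∧
    (2 ≤ m → ∀ γ : Ordinal, γ < Ordinal.omega0 * Ordinal.omega0 →
      ∃ c : Sym2 Ordinal → Bool,
        (¬ ∃ R : Finset Ordinal, ↑R ⊆ Set.Iio γ ∧ R.card = m ∧
          ∀ x ∈ R, ∀ y ∈ R, x ≠ y → c s(x, y) = true) ∧
        (¬ ∃ B : Set Ordinal, B ⊆ Set.Iio γ ∧
          (∀ x ∈ B, ∀ y ∈ B, x ≠ y → c s(x, y) = false) ∧
          Nonempty (↥B ≃o ↥(Set.Iio (Ordinal.omega0 * Ordinal.omega0))))) := by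
  constructor
  · -- Part 1 : the positive partition relation
    intro c
    classical
    set U : Ultrafilter ℕ := Filter.hyperfilter ℕ with hUdef
    have hU : (U : Filter ℕ) ≤ Filter.cofinite := Filter.hyperfilter_le_cofinite
    set C : ℕ × ℕ → ℕ × ℕ → Bool := fun p q => c s(toLex p, toLex q) with hCdef
    have hsym : ∀ p q, C p q = C q p := by
      intro p q
      simp only [hCdef]
      rw [Sym2.eq_swap]
    by_cases hA : {n | FOmSq.okc U C n} ∈ U
    · -- blue case
      right
      obtain ⟨φ, hφ1, hφ2, hφ3⟩ := FOmSq.blue_main hU hsym hA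
      set F : ℕ ×ₗ ℕ → ℕ ×ₗ ℕ := fun x => toLex (φ (ofLex x)) with hFdef
      have hmono : StrictMono F := by
        intro x y hxy
        have hxy' : (ofLex x).1 < (ofLex y).1 ∨
            ((ofLex x).1 = (ofLex y).1 ∧ (ofLex x).2 < (ofLex y).2) :=
          Prod.Lex.lt_iff.1 hxy
        simp only [hFdef]
        rw [Prod.Lex.lt_iff]
        rcases hxy' with h | ⟨h1, h2⟩
        · exact Or.inl (hφ1 _ _ h)
        · obtain ⟨he, hlt⟩ := hφ2 (ofLex x) (ofLex y) h1 h2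
          exact Or.inr ⟨he, hlt⟩
      refine ⟨Set.range F, ?_, ⟨(StrictMono.orderIso F hmono).symm⟩⟩
      rintro x ⟨a, rfl⟩ y ⟨b, rfl⟩ hxy
      have hab : ofLex a ≠ ofLex b := by
        intro h
        exact hxy (congrArg (fun z => toLex (φ z)) h)
      exact hφ3 (ofLex a) (ofLex b) hab
    · -- red case
      left
      have hbad : ({n | ¬ FOmSq.db U C n n} ∈ U) ∨
          ({n | ¬ ({j | FOmSq.good U C (n, j)} ∈ U)} ∈ U) ∨
          ({n | ¬ ({n' | FOmSq.db U C n n'} ∈ U)} ∈ U) ∨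
          ({n | ¬ ({n' | FOmSq.db U C n' n} ∈ U)} ∈ U) := by
        by_contra hcon
        push_neg at hcon
        obtain ⟨h1, h2, h3, h4⟩ := hcon
        apply hA
        have g1 := FOmSq.mem_U_of_not_mem h1
        have g2 := FOmSq.mem_U_of_not_mem h2
        have g3 := FOmSq.mem_U_of_not_mem h3
        have g4 := FOmSq.mem_U_of_not_mem h4
        filter_upwards [g1, g2, g3, g4] with n hn1 hn2 hn3 hn4
        exact ⟨not_not.1 hn1, not_not.1 hn2, not_not.1 hn3, not_not.1 hn4⟩
      have hgoal : ∃ g : ℕ → ℕ × ℕ, ∀ r r', r < r' → r' < m →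
          C (g r) (g r') = true ∧ g r ≠ g r' := by
        rcases hbad with h | h | h | h
        · obtain ⟨n, hn⟩ := Ultrafilter.nonempty_of_mem h
          exact FOmSq.red1 hU hn m
        · exact FOmSq.red2 hU h m
        · exact FOmSq.red3 hU h m
        · exact FOmSq.red4 hU hsym h m
      obtain ⟨g, hg⟩ := hgoal
      exact FOmSq.extract_red c m g hg
  · -- Part 2 : minimality
    intro hm2 γ hγ
    refine ⟨fun _ => false, ?_, ?_⟩
    · rintro ⟨R, -, hcard, hred⟩
      have h2 : 1 < R.card := by omega
      obtain ⟨x, hx, y, hy, hxy⟩ := Finset.one_lt_card.mp h2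
      have := hred x hx y hy hxy
      simp at this
    · rintro ⟨B, hBsub, -, ⟨e⟩⟩
      exact FOmSq.no_blue hγ hBsub e
end

section
/- For every 2-coloring (red/blue) of the 2-element subsets of ℕ × ℕ ordered lexicographically, either there exist red subsets of every finite size m > 0, or there exists a blue subset whose induced lexicographic order has order type ω². -/
/-- Infinite Ramsey theorem for `r`-subsets of ℕ (as increasing tuples),
with finitely many colors. -/
theorem myRamsey (r : ℕ) : ∀ {κ : Type} [Finite κ] (C : (Fin r → ℕ) → κ),
    ∃ f : ℕ → ℕ, StrictMono f ∧ ∃ k : κ,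
      ∀ g : Fin r → ℕ, StrictMono g → C (f ∘ g) = k := by
  induction r with
  | zero =>
    intro κ _ C
    exact ⟨id, strictMono_id, C (fun x => x.elim0),
      fun g _ => congrArg C (funext fun x => x.elim0)⟩
  | succ r ih =>
    intro κ _ C
    have key : ∀ e : ℕ → ℕ, ∃ f : ℕ → ℕ, ∃ k : κ, StrictMono f ∧
        ∀ g : Fin r → ℕ, StrictMono g →
          C (Fin.cases (e 0) (fun j => e (f (g j) + 1))) = k := by
      intro e
      obtain ⟨f, hf, k, hk⟩ := ih (fun t => C (Fin.cases (e 0) (fun j => e (t j + 1))))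
      exact ⟨f, k, hf, fun g hg => hk g hg⟩
    choose F K hF hK using key
    obtain ⟨E, hE0, hES⟩ : ∃ E : ℕ → ℕ → ℕ, E 0 = id ∧
        ∀ i, E (i + 1) = fun n => E i (F (E i) n + 1) :=
      ⟨fun i => Nat.rec id (fun _ ei n => ei (F ei n + 1)) i, rfl, fun _ => rfl⟩
    have hEmono : ∀ i, StrictMono (E i) := by
      intro i
      induction i with
      | zero => rw [hE0]; exact strictMono_id
      | succ i ihe =>
        rw [hES i]
        intro a b hab
        exact ihe (by have := hF (E i) hab; omega)
    have hrange : ∀ i i', i ≤ i' → ∀ n, ∃ m, E i' n = E i m := by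
      intro i i' h
      induction i', h using Nat.le_induction with
      | base => exact fun n => ⟨n, rfl⟩
      | succ i' h ih2 =>
        intro n
        obtain ⟨m, hm⟩ := ih2 (F (E i') n + 1)
        exact ⟨m, by rw [hES i']; exact hm⟩
    set A : ℕ → ℕ := fun i => E i 0 with hA
    have hAmono : StrictMono A := by
      apply strictMono_nat_of_lt_succ
      intro i
      show E i 0 < E (i + 1) 0
      rw [hES i]
      exact hEmono i (Nat.succ_pos _)
    have hkey : ∀ i (t : Fin r → ℕ), StrictMono t →
        C (Fin.cases (A i) (fun j => E (i + 1) (t j))) = K (E i) := by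
      intro i t ht
      have h := hK (E i) t ht
      have e1 : (Fin.cases (A i) (fun j => E (i + 1) (t j)) : Fin (r + 1) → ℕ)
          = Fin.cases (E i 0) (fun j => E i (F (E i) (t j) + 1)) := by
        funext x
        cases x using Fin.cases with
        | zero => simp [hA]
        | succ j => simp [hES i]
      rw [e1]; exact h
    have hend : ∀ v : Fin (r + 1) → ℕ, StrictMono v → C (A ∘ v) = K (E (v 0)) := by
      intro v hv
      have h1 : ∀ j : Fin r, ∃ m, A (v j.succ) = E (v 0 + 1) m := by
        intro j
        have hle : v 0 + 1 ≤ v j.succ := hv (Fin.succ_pos j)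
        exact hrange (v 0 + 1) (v j.succ) hle 0
      choose m hm using h1
      have hmmono : StrictMono m := by
        intro j j' hjj
        have hlt : A (v j.succ) < A (v j'.succ) :=
          hAmono (hv (Fin.succ_lt_succ_iff.mpr hjj))
        rw [hm j, hm j'] at hlt
        exact (hEmono (v 0 + 1)).lt_iff_lt.mp hlt
      have e2 : A ∘ v = Fin.cases (A (v 0)) (fun j => E (v 0 + 1) (m j)) := by
        funext x
        cases x using Fin.cases with
        | zero => rfl
        | succ j => simp [Function.comp, hm j]
      rw [e2]
      exact hkey (v 0) m hmmono
    obtain ⟨kc, hkc⟩ := Finite.exists_infinite_fiber (fun i => K (E i))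
    have hinf : (setOf (fun n => K (E n) = kc)).Infinite := by
      have h := Set.infinite_coe_iff.mp hkc
      apply h.mono
      intro n hn
      exact hn
    refine ⟨A ∘ Nat.nth (fun n => K (E n) = kc),
      hAmono.comp (Nat.nth_strictMono hinf), kc, ?_⟩
    intro g hg
    have h2 := hend (Nat.nth (fun n => K (E n) = kc) ∘ g)
      ((Nat.nth_strictMono hinf).comp hg)
    have h3 : K (E ((Nat.nth (fun n => K (E n) = kc) ∘ g) 0)) = kc :=
      Nat.nth_mem_of_infinite hinf (g 0)
    exact h2.trans h3

/-- The point `(2a, 2b+1)` of `ℕ ×ₗ ℕ`. -/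
def Ppt (a b : ℕ) : ℕ ×ₗ ℕ := toLex (2 * a, 2 * b + 1)

lemma Ppt_inj {a b a' b' : ℕ} (h : Ppt a b = Ppt a' b') : a = a' ∧ b = b' := by
  unfold Ppt at h
  have h' := congrArg ofLex h
  simp only [ofLex_toLex, Prod.mk.injEq] at h'
  omega

lemma sm3 {u v w : ℕ} (h1 : u < v) (h2 : v < w) : StrictMono ![u, v, w] := by
  intro a b hab
  fin_cases a <;> fin_cases b <;> simp_all <;> omega

lemma sm4 {u v w z : ℕ} (h1 : u < v) (h2 : v < w) (h3 : w < z) :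
    StrictMono ![u, v, w, z] := by
  intro a b hab
  fin_cases a <;> fin_cases b <;> simp_all <;> omega

lemma comp3 (s : ℕ → ℕ) (u v w : ℕ) : s ∘ ![u, v, w] = ![s u, s v, s w] := by
  funext x; fin_cases x <;> simp

lemma comp4 (s : ℕ → ℕ) (u v w z : ℕ) :
    s ∘ ![u, v, w, z] = ![s u, s v, s w, s z] := by
  funext x; fin_cases x <;> simp

/-- For every red/blue coloring of the 2-element subsets of ℕ × ℕ ordered
lexicographically, either there are red (`true`) subsets of every finite size
m > 0, or there is a blue (`false`) subset whose induced lexicographic order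
has order type ω² (i.e. is order-isomorphic to ℕ ×ₗ ℕ). -/
theorem red_all_sizes_or_blue_omega_sq (c : Sym2 (ℕ ×ₗ ℕ) → Bool) :
    (∀ m : ℕ, 0 < m → ∃ R : Finset (ℕ ×ₗ ℕ), R.card = m ∧
      ∀ x ∈ R, ∀ y ∈ R, x ≠ y → c s(x, y) = true) ∨
    (∃ B : Set (ℕ ×ₗ ℕ),
      (∀ x ∈ B, ∀ y ∈ B, x ≠ y → c s(x, y) = false) ∧
      Nonempty (↥B ≃o (ℕ ×ₗ ℕ))) := by
  by_cases hred : ∀ m : ℕ, 0 < m → ∃ R : Finset (ℕ ×ₗ ℕ), R.card = m ∧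
      ∀ x ∈ R, ∀ y ∈ R, x ≠ y → c s(x, y) = true
  · exact Or.inl hred
  right
  obtain ⟨m, hm⟩ := not_forall.mp hred
  rw [Classical.not_imp] at hm
  obtain ⟨hm0, hm⟩ := hm
  -- the two derived colorings
  set C3 : (Fin 3 → ℕ) → Bool × Bool := fun t =>
    (c s(Ppt (t 0) (t 1), Ppt (t 0) (t 2)), c s(Ppt (t 0) (t 2), Ppt (t 1) (t 2)))
    with hC3
  set C4 : (Fin 4 → ℕ) → Bool × Bool × Bool := fun t =>
    (c s(Ppt (t 0) (t 2), Ppt (t 1) (t 3)),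
     c s(Ppt (t 0) (t 3), Ppt (t 1) (t 2)),
     c s(Ppt (t 0) (t 1), Ppt (t 2) (t 3))) with hC4
  obtain ⟨f₁, hf₁, k₄, hk₄⟩ := myRamsey 4 C4
  obtain ⟨f₂, hf₂, k₃, hk₃⟩ := myRamsey 3 (fun t => C3 (f₁ ∘ t))
  set s : ℕ → ℕ := f₁ ∘ f₂ with hsdef
  have hs : StrictMono s := hf₁.comp hf₂
  have homog3 : ∀ g : Fin 3 → ℕ, StrictMono g → C3 (s ∘ g) = k₃ := by
    intro g hg
    exact hk₃ g hg
  have homog4 : ∀ g : Fin 4 → ℕ, StrictMono g → C4 (s ∘ g) = k₄ := by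
    intro g hg
    exact hk₄ (f₂ ∘ g) (hf₂.comp hg)
  -- scalar forms of homogeneity
  have H1 : ∀ u v w, u < v → v < w →
      c s(Ppt (s u) (s v), Ppt (s u) (s w)) = k₃.1 := by
    intro u v w h1 h2
    have h := homog3 ![u, v, w] (sm3 h1 h2)
    rw [comp3] at h
    simpa [hC3] using congrArg Prod.fst h
  have H2 : ∀ u v w, u < v → v < w →
      c s(Ppt (s u) (s w), Ppt (s v) (s w)) = k₃.2 := by
    intro u v w h1 h2
    have h := homog3 ![u, v, w] (sm3 h1 h2)
    rw [comp3] at h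
    simpa [hC3] using congrArg Prod.snd h
  have H3 : ∀ u v w z, u < v → v < w → w < z →
      c s(Ppt (s u) (s w), Ppt (s v) (s z)) = k₄.1 := by
    intro u v w z h1 h2 h3
    have h := homog4 ![u, v, w, z] (sm4 h1 h2 h3)
    rw [comp4] at h
    simpa [hC4] using congrArg Prod.fst h
  have H4 : ∀ u v w z, u < v → v < w → w < z →
      c s(Ppt (s u) (s z), Ppt (s v) (s w)) = k₄.2.1 := by
    intro u v w z h1 h2 h3
    have h := homog4 ![u, v, w, z] (sm4 h1 h2 h3)
    rw [comp4] at h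
    simpa [hC4] using congrArg (fun p => p.2.1) h
  have H5 : ∀ u v w z, u < v → v < w → w < z →
      c s(Ppt (s u) (s v), Ppt (s w) (s z)) = k₄.2.2 := by
    intro u v w z h1 h2 h3
    have h := homog4 ![u, v, w, z] (sm4 h1 h2 h3)
    rw [comp4] at h
    simpa [hC4] using congrArg (fun p => p.2.2) h
  -- no red m-family exists
  have hnored : ∀ F : Fin m → ℕ ×ₗ ℕ, Function.Injective F →
      (∀ i j : Fin m, i < j → c s(F i, F j) = true) → False := by
    intro F hFi hFp
    apply hm
    refine ⟨Finset.image F Finset.univ, ?_, ?_⟩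
    · rw [Finset.card_image_of_injective _ hFi, Finset.card_univ, Fintype.card_fin]
    · intro x hx y hy hxy
      simp only [Finset.mem_image, Finset.mem_univ, true_and] at hx hy
      obtain ⟨i, rfl⟩ := hx
      obtain ⟨j, rfl⟩ := hy
      rcases lt_trichotomy i j with h | h | h
      · exact hFp i j h
      · exact absurd (congrArg F h) hxy
      · rw [Sym2.eq_swap]; exact hFp j i h
  -- if any class is red, contradiction
  rcases Bool.eq_false_or_eq_true k₃.1 with hb1 | hb1
  · exfalso
    apply hnored (fun i => Ppt (s 0) (s ((i : ℕ) + 1)))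
    · intro i j h
      obtain ⟨-, h2⟩ := Ppt_inj h
      exact Fin.ext (by have := hs.injective h2; omega)
    · intro i j hij
      have hij' : (i : ℕ) < (j : ℕ) := hij
      rw [H1 0 ((i : ℕ) + 1) ((j : ℕ) + 1) (by omega) (by omega), hb1]
  rcases Bool.eq_false_or_eq_true k₃.2 with hb2 | hb2
  · exfalso
    apply hnored (fun i => Ppt (s (i : ℕ)) (s m))
    · intro i j h
      obtain ⟨h1, -⟩ := Ppt_inj h
      exact Fin.ext (hs.injective h1)
    · intro i j hij
      have hij' : (i : ℕ) < (j : ℕ) := hij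
      have hjm : (j : ℕ) < m := j.isLt
      rw [H2 (i : ℕ) (j : ℕ) m hij' hjm, hb2]
  rcases Bool.eq_false_or_eq_true k₄.1 with hb3 | hb3
  · exfalso
    apply hnored (fun i => Ppt (s (i : ℕ)) (s (m + (i : ℕ))))
    · intro i j h
      obtain ⟨h1, -⟩ := Ppt_inj h
      exact Fin.ext (hs.injective h1)
    · intro i j hij
      have hij' : (i : ℕ) < (j : ℕ) := hij
      have hjm : (j : ℕ) < m := j.isLt
      rw [H3 (i : ℕ) (j : ℕ) (m + (i : ℕ)) (m + (j : ℕ)) hij' (by omega) (by omega), hb3]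
  rcases Bool.eq_false_or_eq_true k₄.2.1 with hb4 | hb4
  · exfalso
    apply hnored (fun i => Ppt (s (i : ℕ)) (s (2 * m - 1 - (i : ℕ))))
    · intro i j h
      obtain ⟨h1, -⟩ := Ppt_inj h
      exact Fin.ext (hs.injective h1)
    · intro i j hij
      have hij' : (i : ℕ) < (j : ℕ) := hij
      have hjm : (j : ℕ) < m := j.isLt
      rw [H4 (i : ℕ) (j : ℕ) (2 * m - 1 - (j : ℕ)) (2 * m - 1 - (i : ℕ))
        hij' (by omega) (by omega), hb4]
  rcases Bool.eq_false_or_eq_true k₄.2.2 with hb5 | hb5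
  · exfalso
    apply hnored (fun i => Ppt (s (2 * (i : ℕ))) (s (2 * (i : ℕ) + 1)))
    · intro i j h
      obtain ⟨h1, -⟩ := Ppt_inj h
      exact Fin.ext (by have := hs.injective h1; omega)
    · intro i j hij
      have hij' : (i : ℕ) < (j : ℕ) := hij
      rw [H5 (2 * (i : ℕ)) (2 * (i : ℕ) + 1) (2 * (j : ℕ)) (2 * (j : ℕ) + 1)
        (by omega) (by omega) (by omega), hb5]
  -- all classes blue: build the blue set of order type ω²
  set ψ : ℕ ×ₗ ℕ → ℕ ×ₗ ℕ := fun p =>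
    Ppt (s (2 * (ofLex p).1)) (s (2 * ((ofLex p).1 + (ofLex p).2) + 1)) with hψdef
  have hψ : StrictMono ψ := by
    intro p q hpq
    have hpq' : (ofLex p).1 < (ofLex q).1 ∨
        (ofLex p).1 = (ofLex q).1 ∧ (ofLex p).2 < (ofLex q).2 := by
      rw [← toLex_ofLex p, ← toLex_ofLex q] at hpq
      exact Prod.Lex.lt_iff.mp hpq
    show toLex _ < toLex _
    rw [Prod.Lex.lt_iff]
    rcases hpq' with h | ⟨h1, h2⟩
    · left
      have := hs (show 2 * (ofLex p).1 < 2 * (ofLex q).1 by omega)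
      simpa using this
    · right
      constructor
      · simp [h1]
      · have := hs (show 2 * ((ofLex p).1 + (ofLex p).2) + 1 <
          2 * ((ofLex q).1 + (ofLex q).2) + 1 by omega)
        simpa [h1] using this
  have hblue : ∀ i j i' j' : ℕ, (i, j) ≠ (i', j') → i ≤ i' →
      c s(Ppt (s (2 * i)) (s (2 * (i + j) + 1)),
          Ppt (s (2 * i')) (s (2 * (i' + j') + 1))) = false := by
    intro i j i' j' hne hle
    rcases eq_or_lt_of_le hle with rfl | hlt
    · have hjj : j ≠ j' := fun h => hne (by rw [h])
      rcases hjj.lt_or_gt with h | h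
      · rw [H1 (2 * i) (2 * (i + j) + 1) (2 * (i + j') + 1) (by omega) (by omega), hb1]
      · rw [Sym2.eq_swap,
          H1 (2 * i) (2 * (i + j') + 1) (2 * (i + j) + 1) (by omega) (by omega), hb1]
    · rcases lt_trichotomy (2 * (i + j) + 1) (2 * i') with h | h | h
      · rw [H5 (2 * i) (2 * (i + j) + 1) (2 * i') (2 * (i' + j') + 1)
          (by omega) h (by omega), hb5]
      · omega
      · rcases lt_trichotomy (2 * (i + j) + 1) (2 * (i' + j') + 1) with h2 | h2 | h2
        · rw [H3 (2 * i) (2 * i') (2 * (i + j) + 1) (2 * (i' + j') + 1)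
            (by omega) h h2, hb3]
        · rw [show (2 * (i' + j') + 1) = 2 * (i + j) + 1 from h2.symm]
          rw [H2 (2 * i) (2 * i') (2 * (i + j) + 1) (by omega) h, hb2]
        · rw [H4 (2 * i) (2 * i') (2 * (i' + j') + 1) (2 * (i + j) + 1)
            (by omega) (by omega) h2, hb4]
  refine ⟨Set.range ψ, ?_, ⟨(hψ.orderIso ψ).symm⟩⟩
  rintro x ⟨p, rfl⟩ y ⟨q, rfl⟩ hxy
  have hne : ((ofLex p).1, (ofLex p).2) ≠ ((ofLex q).1, (ofLex q).2) := by
    intro h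
    apply hxy
    have : p = q := by
      have := congrArg toLex (show (ofLex p) = (ofLex q) from Prod.ext
        (congrArg Prod.fst h) (congrArg Prod.snd h))
      simpa using this
    rw [this]
  rcases le_total (ofLex p).1 (ofLex q).1 with h | h
  · exact hblue _ _ _ _ hne h
  · rw [Sym2.eq_swap]
    exact hblue _ _ _ _ (Ne.symm hne) h
end

section
/- Let c be a 2-coloring (red/blue) of the 2-element subsets of ℕ × ℕ such that every edge {(a,b),(a',b')} is blue whenever a < b < a' < b', or a < a' < b < b', or a < a' < b' < b. Then either there exist red subsets of every finite size m > 0, or there exists a blue subset of ℕ × ℕ whose induced lexicographic order has order type ω². -/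
open Classical

def rphi (i k : ℕ) : ℕ := 2*(2^i*(2*k+1))+1

theorem rphi_mono (i : ℕ) : StrictMono (rphi i) := by
  intro k l h
  unfold rphi
  have h2 : (2:ℕ)^i > 0 := pow_pos (by norm_num) i
  have : 2^i*(2*k+1) < 2^i*(2*l+1) := (Nat.mul_lt_mul_left h2).mpr (by omega)
  omega

theorem rphi_gt (i k : ℕ) : 2*i < rphi i k := by
  unfold rphi
  have h1 : i < 2^i := Nat.lt_two_pow_self (n := i)
  have h2 : (2:ℕ)^i ≤ 2^i*(2*k+1) := Nat.le_mul_of_pos_right _ (by omega)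
  omega

theorem rphi_odd (i k : ℕ) : rphi i k % 2 = 1 := by
  unfold rphi; omega

theorem rphi_ne_aux {i i' k k' : ℕ} (h : i < i') : rphi i k ≠ rphi i' k' := by
  intro heq
  unfold rphi at heq
  have h2 : 2^i*(2*k+1) = 2^i'*(2*k'+1) := by omega
  obtain ⟨d, rfl⟩ : ∃ d, i' = i + (d+1) := ⟨i' - i - 1, by omega⟩
  rw [pow_add] at h2
  have h3 : (2:ℕ)^i > 0 := pow_pos (by norm_num) i
  have h4 : 2*k+1 = 2^(d+1)*(2*k'+1) := by
    apply Nat.eq_of_mul_eq_mul_left h3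
    rw [h2]; ring
  have h5 : 2^(d+1)*(2*k'+1) = 2*(2^d*(2*k'+1)) := by rw [pow_succ]; ring
  omega

theorem rphi_ne {i i' k k' : ℕ} (h : i ≠ i') : rphi i k ≠ rphi i' k' := by
  rcases h.lt_or_gt with h | h
  · exact rphi_ne_aux h
  · exact fun e => rphi_ne_aux h e.symm

open Classical

/-- One step of the Ramsey construction. -/
theorem ram_exists_step (d : ℕ → ℕ → Bool) (X : Set ℕ) (hX : X.Infinite) :
    ∃ p : ℕ × Bool × Set ℕ, p.1 ∈ X ∧ p.2.2 ⊆ X ∧ p.2.2.Infinite ∧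
      ∀ x ∈ p.2.2, p.1 < x ∧ d p.1 x = p.2.1 := by
  obtain ⟨a, ha⟩ := hX.nonempty
  have h1 : {x ∈ X | a < x}.Infinite := by
    apply (hX.diff (Set.finite_Iic a)).mono
    intro x hx
    simp only [Set.mem_diff, Set.mem_Iic, not_le] at hx
    exact ⟨hx.1, hx.2⟩
  have hsplit : {x ∈ X | a < x} =
      {x ∈ X | a < x ∧ d a x = true} ∪ {x ∈ X | a < x ∧ d a x = false} := by
    ext x
    simp only [Set.mem_setOf_eq, Set.mem_union]
    rcases Bool.eq_false_or_eq_true (d a x) with h | h <;> tauto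
  rw [hsplit, Set.infinite_union] at h1
  rcases h1 with h1 | h1
  · exact ⟨(a, true, {x ∈ X | a < x ∧ d a x = true}), ha,
      fun x hx => hx.1, h1, fun x hx => hx.2⟩
  · exact ⟨(a, false, {x ∈ X | a < x ∧ d a x = false}), ha,
      fun x hx => hx.1, h1, fun x hx => hx.2⟩

/-- Infinite Ramsey theorem (for increasing pairs). -/
theorem inf_ramsey (d : ℕ → ℕ → Bool) :
    ∃ (f : ℕ → ℕ) (v : Bool), StrictMono f ∧ ∀ k l, k < l → d (f k) (f l) = v := by
  -- the chain of infinite sets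
  let pick : {X : Set ℕ // X.Infinite} → ℕ × Bool × Set ℕ :=
    fun X => (ram_exists_step d X.1 X.2).choose
  have pickspec : ∀ X : {X : Set ℕ // X.Infinite}, (pick X).1 ∈ X.1 ∧
      (pick X).2.2 ⊆ X.1 ∧ (pick X).2.2.Infinite ∧
      ∀ x ∈ (pick X).2.2, (pick X).1 < x ∧ d (pick X).1 x = (pick X).2.1 :=
    fun X => (ram_exists_step d X.1 X.2).choose_spec
  let chain : ℕ → {X : Set ℕ // X.Infinite} := fun n =>
    Nat.rec ⟨Set.univ, Set.infinite_univ⟩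
      (fun _ X => ⟨(pick X).2.2, (pickspec X).2.2.1⟩) n
  have chainsucc : ∀ n, (chain (n+1)).1 = (pick (chain n)).2.2 := fun n => rfl
  let A : ℕ → ℕ := fun n => (pick (chain n)).1
  let V : ℕ → Bool := fun n => (pick (chain n)).2.1
  have hmemA : ∀ n, A (n+1) ∈ (chain (n+1)).1 := fun n => (pickspec (chain (n+1))).1
  have hsub : ∀ n, (chain (n+1)).1 ⊆ (chain n).1 := by
    intro n
    rw [chainsucc]
    exact (pickspec (chain n)).2.1
  have hsub2 : ∀ n m, n ≤ m → (chain m).1 ⊆ (chain n).1 := by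
    intro n m h
    induction m with
    | zero => cases Nat.le_zero.mp h; exact fun x hx => hx
    | succ m ih =>
      rcases Nat.lt_or_ge n (m+1) with h' | h'
      · exact fun x hx => ih (Nat.lt_succ_iff.mp h') (hsub m hx)
      · have : n = m + 1 := le_antisymm h h'
        subst this; exact fun x hx => hx
  have key : ∀ n m, n < m → A n < A m ∧ d (A n) (A m) = V n := by
    intro n m h
    have : A m ∈ (pick (chain n)).2.2 := by
      have h1 : A m ∈ (chain m).1 := by
        cases m with
        | zero => omega
        | succ m => exact hmemA m
      have : A m ∈ (chain (n+1)).1 := hsub2 (n+1) m h h1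
      rwa [chainsucc] at this
    exact (pickspec (chain n)).2.2.2 _ this
  -- pigeonhole on V
  have hV : {n | V n = true}.Infinite ∨ {n | V n = false}.Infinite := by
    rw [← Set.infinite_union]
    have : {n | V n = true} ∪ {n | V n = false} = Set.univ := by
      ext n
      simp only [Set.mem_union, Set.mem_setOf_eq, Set.mem_univ, iff_true]
      rcases Bool.eq_false_or_eq_true (V n) with h | h <;> tauto
    rw [this]; exact Set.infinite_univ
  have : ∃ v : Bool, {n | V n = v}.Infinite := by
    rcases hV with h | h
    exacts [⟨true, h⟩, ⟨false, h⟩]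
  obtain ⟨v, hv⟩ := this
  have : Infinite ↥{n | V n = v} := Set.infinite_coe_iff.mpr hv
  let e : ℕ ↪o ℕ := Nat.orderEmbeddingOfSet {n | V n = v}
  have he : ∀ n, V (e n) = v := by
    intro n
    have : e n ∈ {n | V n = v} := by
      rw [← Nat.orderEmbeddingOfSet_range {n | V n = v}]
      exact ⟨n, rfl⟩
    exact this
  refine ⟨fun k => A (e k), v, ?_, ?_⟩
  · intro k l hkl
    exact (key _ _ (e.strictMono hkl)).1
  · intro k l hkl
    rw [(key _ _ (e.strictMono hkl)).2, he]

/-- Suppose every edge {(a,b),(a',b')} with a < b < a' < b', or a < a' < b < b',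
or a < a' < b' < b is blue (`false`). Then either there are red (`true`)
subsets of every finite size m > 0, or there is a blue subset of ℕ × ℕ whose
induced lexicographic order has order type ω² (i.e. is order-isomorphic to
ℕ ×ₗ ℕ). -/
theorem second_case (c : Sym2 (ℕ ×ₗ ℕ) → Bool)
    (hc : ∀ a b a' b' : ℕ,
      ((a < b ∧ b < a' ∧ a' < b') ∨ (a < a' ∧ a' < b ∧ b < b') ∨
        (a < a' ∧ a' < b' ∧ b' < b)) →
      c s(toLex (a, b), toLex (a', b')) = false) :
    (∀ m : ℕ, 0 < m → ∃ R : Finset (ℕ ×ₗ ℕ), R.card = m ∧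
      ∀ x ∈ R, ∀ y ∈ R, x ≠ y → c s(x, y) = true) ∨
    (∃ B : Set (ℕ ×ₗ ℕ),
      (∀ x ∈ B, ∀ y ∈ B, x ≠ y → c s(x, y) = false) ∧
      Nonempty (↥B ≃o (ℕ ×ₗ ℕ))) := by
  choose f v hf hfv using fun i =>
    inf_ramsey (fun m n => c s(toLex (2*i, rphi i m), toLex (2*i, rphi i n)))
  by_cases hred : ∃ i, v i = true
  · left
    obtain ⟨i, hi⟩ := hred
    intro m _
    set F : ℕ → ℕ ×ₗ ℕ := fun k => toLex (2*i, rphi i (f i k)) with hF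
    have hFinj : Function.Injective F := by
      intro k l h
      have h2 : rphi i (f i k) = rphi i (f i l) := congrArg (fun x => (ofLex x).2) h
      exact (hf i).injective ((rphi_mono i).injective h2)
    refine ⟨(Finset.range m).image F, ?_, ?_⟩
    · rw [Finset.card_image_of_injective _ hFinj, Finset.card_range]
    · intro x hx y hy hxy
      simp only [Finset.mem_image, Finset.mem_range] at hx hy
      obtain ⟨k, _, rfl⟩ := hx
      obtain ⟨l, _, rfl⟩ := hy
      have hkl : k ≠ l := fun h => hxy (by rw [h])
      rcases hkl.lt_or_gt with h | h
      · have := hfv i k l h; rw [hi] at this; exact this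
      · rw [Sym2.eq_swap]
        have := hfv i l k h; rw [hi] at this; exact this
  · right
    push_neg at hred
    have hblue : ∀ i, v i = false := fun i => Bool.not_eq_true _ |>.mp (hred i)
    set g : ℕ ×ₗ ℕ → ℕ ×ₗ ℕ :=
      fun p => toLex (2*(ofLex p).1, rphi (ofLex p).1 (f (ofLex p).1 (ofLex p).2)) with hgdef
    have hg : StrictMono g := by
      rintro ⟨i, j⟩ ⟨i', j'⟩ h
      have h' : i < i' ∨ i = i' ∧ j < j' := Prod.Lex.lt_iff.mp h
      apply Prod.Lex.lt_iff.mpr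
      rcases h' with h' | ⟨rfl, h'⟩
      · exact Or.inl (by simpa using by omega : 2*i < 2*i')
      · exact Or.inr ⟨rfl, (rphi_mono i) ((hf i) h')⟩
    have cross : ∀ i j i' j', i < i' →
        c s(g (toLex (i, j)), g (toLex (i', j'))) = false := by
      intro i j i' j' h
      set b := rphi i (f i j) with hb
      set b' := rphi i' (f i' j') with hb'
      have hgb : g (toLex (i, j)) = toLex (2*i, b) := rfl
      have hgb' : g (toLex (i', j')) = toLex (2*i', b') := rfl
      rw [hgb, hgb']
      apply hc
      have h1 : 2*i < b := rphi_gt i _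
      have h2 : 2*i' < b' := rphi_gt i' _
      have h3 : b % 2 = 1 := rphi_odd i _
      have h4 : b ≠ b' := rphi_ne h.ne
      rcases lt_trichotomy b (2*i') with h5 | h5 | h5
      · exact Or.inl ⟨h1, h5, h2⟩
      · omega
      · rcases lt_trichotomy b b' with h6 | h6 | h6
        · exact Or.inr (Or.inl ⟨by omega, h5, h6⟩)
        · omega
        · exact Or.inr (Or.inr ⟨by omega, h2, h6⟩)
    refine ⟨Set.range g, ?_, ⟨(StrictMono.orderIso g hg).symm⟩⟩
    rintro x ⟨⟨i, j⟩, rfl⟩ y ⟨⟨i', j'⟩, rfl⟩ hxy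
    rcases lt_trichotomy i i' with h | h | h
    · exact cross i j i' j' h
    · subst h
      have hjj' : j ≠ j' := by
        intro h; exact hxy (by rw [h])
      rcases hjj'.lt_or_gt with h | h
      · have := hfv i j j' h; rw [hblue] at this; exact this
      · rw [Sym2.eq_swap]
        have := hfv i j' j h; rw [hblue] at this; exact this
    · rw [Sym2.eq_swap]
      exact cross i' j' i j h
end
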